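/- arXiv:1105.2378 — 7 statements merged into one kernel-verified Lean document; each statement's English description precedes it below -/
import Mathlib

section
/- Fix 0 < α₁ < α₂ and suppose there exists κ₂ > 0 such that for every (a₁,a₂) ∈ ℝ² and every κ₁ ≥ 0 there exists a Lyapunov function on all of ℝ² for the operator L with parameters (a₁, a₂, α₁, α₂, κ₁, κ₂). Then for every (b₁,b₂) ∈ ℝ², every ι₁ ≥ 0 and every ι₂ > 0, there exists a Lyapunov function on all of ℝ² for the operator L with parameters (b₁, b₂, α₁, α₂, ι₁, ι₂). -/
noncomputable def Lop (a₁ a₂ α₁ α₂ κ₁ κ₂ : ℝ) (Φ : ℝ × ℝ → ℝ) (p : ℝ × ℝ) : ℝ :=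
  (a₁ * p.1 - α₁ * p.1 ^ 2 + p.2 ^ 2) * deriv (fun t => Φ (t, p.2)) p.1
    + (a₂ * p.2 - α₂ * p.1 * p.2) * deriv (fun t => Φ (p.1, t)) p.2
    + κ₁ * deriv (deriv (fun t => Φ (t, p.2))) p.1
    + κ₂ * deriv (deriv (fun t => Φ (p.1, t))) p.2

/-- `φ` is a Lyapunov function for the operator `L` (with the given parameters) on `U`:
(I) `φ` is `C^∞` on `U`; (II) `φ z → ∞` as `|z| → ∞`, `z ∈ U`;
(III) there are `C, D > 0` with `Lφ ≤ -C•φ + D` on `U`. -/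
def IsLyapunovOn (a₁ a₂ α₁ α₂ κ₁ κ₂ : ℝ) (φ : ℝ × ℝ → ℝ) (U : Set (ℝ × ℝ)) : Prop :=
  ContDiffOn ℝ (⊤ : ℕ∞) φ U ∧
    (∀ M : ℝ, ∃ R : ℝ, ∀ z ∈ U, R < ‖z‖ → M < φ z) ∧
    (∃ C > (0:ℝ), ∃ D > (0:ℝ), ∀ z ∈ U, Lop a₁ a₂ α₁ α₂ κ₁ κ₂ φ z ≤ -C * φ z + D)

/-!
The drift of `L` is quadratic plus linear and its diffusion is constant, so the dilation
`Ψ z = Φ (r • z)` satisfies `r • LΨ = L'Φ (r • ·)`, where `L'` has its linear drift coefficients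
multiplied by `r` and its diffusion coefficients multiplied by `r ^ 3`, and the quadratic part
unchanged. Dilations preserve the Lyapunov property, and `r ^ 3 = κ₂ / ι₂` turns the diffusion
coefficient `ι₂` into `κ₂`.
-/

open Set
open scoped Pointwise

theorem deriv_deriv_comp_mul_left {𝕜 E : Type*} [NontriviallyNormedField 𝕜]
    [NormedAddCommGroup E] [NormedSpace 𝕜 E] (c : 𝕜) (f : 𝕜 → E) (x : 𝕜) :
    deriv (deriv (f <| c * ·)) x = (c ^ 2) • deriv (deriv f) (c * x) := by
  have hderiv : deriv (f <| c * ·) = c • (deriv f <| c * ·) :=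
    funext (deriv_comp_mul_left c f)
  rw [hderiv, deriv_const_smul_field, deriv_comp_mul_left, smul_smul, sq]

theorem Lop_comp_smul (b₁ b₂ α₁ α₂ ι₁ ι₂ r : ℝ) (Φ : ℝ × ℝ → ℝ) (p : ℝ × ℝ) :
    r * Lop b₁ b₂ α₁ α₂ ι₁ ι₂ (fun q => Φ (r • q)) p
      = Lop (r * b₁) (r * b₂) α₁ α₂ (r ^ 3 * ι₁) (r ^ 3 * ι₂) Φ (r • p) := by
  obtain ⟨x, y⟩ := p
  simp only [Lop, Prod.smul_mk, smul_eq_mul]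
  rw [deriv_comp_mul_left r (fun s => Φ (s, r * y)) x,
    deriv_comp_mul_left r (fun s => Φ (r * x, s)) y,
    deriv_deriv_comp_mul_left r (fun s => Φ (s, r * y)) x,
    deriv_deriv_comp_mul_left r (fun s => Φ (r * x, s)) y]
  simp only [smul_eq_mul]
  ring

theorem IsLyapunovOn.comp_smul {b₁ b₂ α₁ α₂ ι₁ ι₂ r : ℝ} {Φ : ℝ × ℝ → ℝ} {U : Set (ℝ × ℝ)}
    (hr : 0 < r) (hΦ : IsLyapunovOn (r * b₁) (r * b₂) α₁ α₂ (r ^ 3 * ι₁) (r ^ 3 * ι₂) Φ (r • U)) :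
    IsLyapunovOn b₁ b₂ α₁ α₂ ι₁ ι₂ (fun q => Φ (r • q)) U := by
  obtain ⟨hsmooth, hgrowth, C, hC, D, hD, hdrift⟩ := hΦ
  refine ⟨hsmooth.comp (contDiffOn_id.const_smul r) fun z hz => smul_mem_smul_set hz,
    fun M => ?_, C / r, div_pos hC hr, D / r, div_pos hD hr, fun z hz => ?_⟩
  · obtain ⟨R, hR⟩ := hgrowth M
    refine ⟨R / r, fun z hz hRz => hR _ (smul_mem_smul_set hz) ?_⟩
    rw [norm_smul, Real.norm_of_nonneg hr.le]
    rwa [div_lt_iff₀' hr] at hRz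
  · have hscaled := Lop_comp_smul b₁ b₂ α₁ α₂ ι₁ ι₂ r Φ z
    have hbound := hdrift (r • z) (smul_mem_smul_set hz)
    rw [← hscaled, ← le_div_iff₀' hr] at hbound
    calc Lop b₁ b₂ α₁ α₂ ι₁ ι₂ (fun q => Φ (r • q)) z ≤ (-C * Φ (r • z) + D) / r := hbound
      _ = -(C / r) * Φ (r • z) + D / r := by ring

theorem statement1_general (α₁ α₂ : ℝ)
    (h : ∃ κ₂ > (0:ℝ), ∀ a₁ a₂ : ℝ, ∀ κ₁ ≥ (0:ℝ),
      ∃ Φ : ℝ × ℝ → ℝ, IsLyapunovOn a₁ a₂ α₁ α₂ κ₁ κ₂ Φ Set.univ) :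
    ∀ b₁ b₂ : ℝ, ∀ ι₁ ≥ (0:ℝ), ∀ ι₂ > (0:ℝ),
      ∃ Φ : ℝ × ℝ → ℝ, IsLyapunovOn b₁ b₂ α₁ α₂ ι₁ ι₂ Φ Set.univ := by
  obtain ⟨κ₂, hκ₂, H⟩ := h
  intro b₁ b₂ ι₁ hι₁ ι₂ hι₂
  set r : ℝ := (κ₂ / ι₂) ^ ((3 : ℕ)⁻¹ : ℝ)
  have hr : 0 < r := Real.rpow_pos_of_pos (div_pos hκ₂ hι₂) _
  have hκ₂_eq : r ^ 3 * ι₂ = κ₂ := by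
    rw [Real.rpow_inv_natCast_pow (div_pos hκ₂ hι₂).le three_ne_zero, div_mul_cancel₀ _ hι₂.ne']
  obtain ⟨Φ, hΦ⟩ := H (r * b₁) (r * b₂) (r ^ 3 * ι₁) (by positivity)
  rw [← hκ₂_eq, ← smul_set_univ₀ hr.ne'] at hΦ
  exact ⟨_, hΦ.comp_smul hr⟩

/-- reduction of parameters. -/
theorem statement1 (α₁ α₂ : ℝ) (hα₁ : 0 < α₁) (hα : α₁ < α₂)
    (h : ∃ κ₂ > (0:ℝ), ∀ a₁ a₂ : ℝ, ∀ κ₁ ≥ (0:ℝ),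
      ∃ Φ : ℝ × ℝ → ℝ, IsLyapunovOn a₁ a₂ α₁ α₂ κ₁ κ₂ Φ Set.univ) :
    ∀ b₁ b₂ : ℝ, ∀ ι₁ ≥ (0:ℝ), ∀ ι₂ > (0:ℝ),
      ∃ Φ : ℝ × ℝ → ℝ, IsLyapunovOn b₁ b₂ α₁ α₂ ι₁ ι₂ Φ Set.univ :=
  statement1_general α₁ α₂ h
end

section
/- Let a₁, a₂ ∈ ℝ, 0 < α₁ < α₂, κ₁ ≥ 0 and 0 < κ₂ < 4α₁. Set σ = (α₁+α₂)/(2α₂), δ = κ₂/(8α₁), β = (2+σ)δ, C₁ = 2, and define φ₁(x,y) = C₁(5|x|^β − y²|x|^{β+1}) on U₁ = {(x,y) : x < −2 and |y| < 2|x|^{−1/2}}. Then φ₁ is a Lyapunov function for L on U₁; in fact φ₁(x,y) > C₁|x|^β on U₁, φ₁(z) → ∞ as |z| → ∞ with z ∈ U₁, and there exists a constant D₁ > 0 such that (Lφ₁)(x,y) ≤ −(κ₂/80)·φ₁(x,y) + D₁ for all (x,y) ∈ U₁. -/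
noncomputable def phi1 (β : ℝ) (p : ℝ × ℝ) : ℝ :=
  2 * (5 * |p.1| ^ β - p.2 ^ 2 * |p.1| ^ (β + 1))

def U1 : Set (ℝ × ℝ) := {p : ℝ × ℝ | p.1 < -2 ∧ |p.2| < 2 * |p.1| ^ (-(1:ℝ)/2)}

/-!
On `U1` write `r = |x|` and `s = y² r`, so that `0 ≤ s < 4`. Then `φ₁ = 2 r^β (5 - s) > 2 r^β`
and `Lφ₁ = 2 r^β F(r, s)`, where the only unbounded terms of `F` are
`(5 α₁ β - 2 κ₂) r - (α₁ (β + 1) + 2 α₂) s r`. The choice of `β` gives `5 α₁ β ≤ 15 κ₂ / 8`,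
hence `F ≤ K - κ₂ r / 8`, and the drift bound follows because `r^β (K' - κ₂ r / 4)` is bounded
above for `r ≥ 0`.
-/

open Real Filter Topology

lemma hasDerivAt_abs_rpow_of_neg {x : ℝ} (hx : x < 0) (p : ℝ) :
    HasDerivAt (fun t => |t| ^ p) (-(p * |x| ^ (p - 1))) x := by
  simpa using (hasDerivAt_abs_neg hx).rpow_const (p := p) (Or.inl (abs_ne_zero.2 hx.ne))

lemma sq_mul_lt_four {t y : ℝ} (ht : 0 < t) (hy : |y| < 2 * t ^ (-(1:ℝ)/2)) :
    y ^ 2 * t < 4 := by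
  have hsq : (t ^ (-(1:ℝ)/2)) ^ 2 = t⁻¹ := by
    rw [← rpow_natCast, ← rpow_mul ht.le]; norm_num [rpow_neg_one]
  have : y ^ 2 < 4 * t⁻¹ := by
    calc y ^ 2 = |y| ^ 2 := (sq_abs y).symm
      _ < (2 * t ^ (-(1:ℝ)/2)) ^ 2 := by gcongr
      _ = 4 * t⁻¹ := by rw [mul_pow, hsq]; norm_num
  calc y ^ 2 * t < 4 * t⁻¹ * t := by gcongr
    _ = 4 := by field_simp

lemma exists_rpow_mul_sub_le {β c : ℝ} (hβ : 0 ≤ β) (hc : 0 < c) (K : ℝ) :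
    ∃ D > 0, ∀ r, 0 ≤ r → r ^ β * (K - c * r) ≤ D := by
  refine ⟨|K| * (|K| / c) ^ β + 1, by positivity, fun r hr => ?_⟩
  rcases le_or_gt r (|K| / c) with hle | hlt
  · calc r ^ β * (K - c * r) ≤ r ^ β * |K| := by
          gcongr; nlinarith [le_abs_self K]
      _ ≤ (|K| / c) ^ β * |K| := by gcongr
      _ ≤ _ := by linarith [mul_comm ((|K| / c) ^ β) |K|]
  · have : K - c * r ≤ 0 := by
      rw [div_lt_iff₀ hc] at hlt; linarith [le_abs_self K]
    nlinarith [rpow_nonneg hr β,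
      mul_nonneg (abs_nonneg K) (rpow_nonneg (div_nonneg (abs_nonneg K) hc.le) β)]

lemma hasDerivAt_phi1_fst (β y : ℝ) {x : ℝ} (hx : x < 0) :
    HasDerivAt (fun t => phi1 β (t, y))
      (2 * ((β + 1) * y ^ 2 * |x| ^ β - 5 * β * |x| ^ (β - 1))) x := by
  refine ((((hasDerivAt_abs_rpow_of_neg hx β).const_mul 5).sub
    ((hasDerivAt_abs_rpow_of_neg hx (β + 1)).const_mul (y ^ 2))).const_mul 2).congr_deriv ?_
  rw [add_sub_cancel_right]; ring

lemma deriv_deriv_phi1_fst (β y : ℝ) {x : ℝ} (hx : x < 0) :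
    deriv (deriv fun t => phi1 β (t, y)) x
      = 2 * (5 * β * (β - 1) * |x| ^ (β - 2) - (β + 1) * β * y ^ 2 * |x| ^ (β - 1)) := by
  have hderiv : deriv (fun t => phi1 β (t, y)) =ᶠ[𝓝 x]
      fun t => 2 * ((β + 1) * y ^ 2 * |t| ^ β - 5 * β * |t| ^ (β - 1)) :=
    (eventually_lt_nhds hx).mono fun t ht => (hasDerivAt_phi1_fst β y ht).deriv
  rw [hderiv.deriv_eq]
  refine (((((hasDerivAt_abs_rpow_of_neg hx β).const_mul ((β + 1) * y ^ 2)).sub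
    ((hasDerivAt_abs_rpow_of_neg hx (β - 1)).const_mul (5 * β))).const_mul 2).congr_deriv
    ?_).deriv
  rw [show β - 1 - 1 = β - 2 by ring]; ring

lemma deriv_phi1_snd (β x y : ℝ) :
    deriv (fun t => phi1 β (x, t)) y = -4 * y * |x| ^ (β + 1) := by
  simp [phi1]; ring

lemma deriv_deriv_phi1_snd (β x y : ℝ) :
    deriv (deriv fun t => phi1 β (x, t)) y = -4 * |x| ^ (β + 1) := by
  simp [funext (deriv_phi1_snd β x), mul_comm]

noncomputable def phi1DriftFactor (a₁ a₂ α₁ α₂ κ₁ κ₂ β r s : ℝ) : ℝ :=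
  (-a₁ - α₁ * r + s / r ^ 2) * ((β + 1) * s - 5 * β) - 2 * a₂ * s - 2 * α₂ * s * r
    + κ₁ * β * (5 * (β - 1) - (β + 1) * s) / r ^ 2 - 2 * κ₂ * r

lemma Lop_phi1_of_neg (a₁ a₂ α₁ α₂ κ₁ κ₂ β : ℝ) {x : ℝ} (hx : x < 0) (y : ℝ) :
    Lop a₁ a₂ α₁ α₂ κ₁ κ₂ (phi1 β) (x, y)
      = 2 * |x| ^ β * phi1DriftFactor a₁ a₂ α₁ α₂ κ₁ κ₂ β |x| (y ^ 2 * |x|) := by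
  have hr : 0 < |x| := abs_pos.2 hx.ne
  have hxr : x = -|x| := by rw [abs_of_neg hx, neg_neg]
  simp only [Lop, (hasDerivAt_phi1_fst β y hx).deriv, deriv_deriv_phi1_fst β y hx,
    deriv_phi1_snd, deriv_deriv_phi1_snd, phi1DriftFactor]
  rw [rpow_sub hr, rpow_sub hr, rpow_add hr, rpow_one, rpow_two]
  set r := |x|
  rw [hxr]
  field_simp
  ring

lemma phi1DriftFactor_le (a₁ a₂ α₁ α₂ κ₁ κ₂ β c : ℝ) (hα₁ : 0 ≤ α₁) (hα₂ : 0 ≤ α₂)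
    (hκ₁ : 0 ≤ κ₁) (hβ : 0 ≤ β) (hc : 5 * α₁ * β - 2 * κ₂ ≤ -c) :
    ∃ K, ∀ r s, 2 < r → 0 ≤ s → s ≤ 4 →
      phi1DriftFactor a₁ a₂ α₁ α₂ κ₁ κ₂ β r s ≤ K - c * r := by
  refine ⟨(|a₁| + 1) * (9 * β + 4) + 8 * |a₂| + 5 * κ₁ * β * |β - 1|,
    fun r s hr hs0 hs4 => ?_⟩
  have hr0 : 0 < r := by linarith
  have hinv : 1 / r ^ 2 ≤ 1 := by
    rw [div_le_one (by positivity)]; nlinarith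
  have hm : |(β + 1) * s - 5 * β| ≤ 9 * β + 4 := by
    rw [abs_le]; constructor <;> nlinarith
  have hsr : |-a₁ + s / r ^ 2| ≤ |a₁| + 1 := by
    calc |-a₁ + s / r ^ 2| ≤ |a₁| + s / r ^ 2 := by
          have hq : 0 ≤ s / r ^ 2 := by positivity
          exact (abs_add_le _ _).trans_eq (by rw [abs_neg, abs_of_nonneg hq])
      _ ≤ |a₁| + 1 := by
          gcongr; rw [div_le_one (by positivity)]; nlinarith
  have h1 : (-a₁ + s / r ^ 2) * ((β + 1) * s - 5 * β) ≤ (|a₁| + 1) * (9 * β + 4) := by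
    calc _ ≤ |(-a₁ + s / r ^ 2) * ((β + 1) * s - 5 * β)| := le_abs_self _
      _ = _ := abs_mul _ _
      _ ≤ _ := mul_le_mul hsr hm (abs_nonneg _) (by positivity)
  have h2 : -(α₁ * r) * ((β + 1) * s - 5 * β) ≤ 5 * α₁ * β * r := by
    nlinarith [mul_nonneg (mul_nonneg hα₁ hr0.le) (mul_nonneg (by linarith : 0 ≤ β + 1) hs0)]
  have h3 : -2 * a₂ * s ≤ 8 * |a₂| := by
    nlinarith [neg_abs_le a₂, abs_nonneg a₂]
  have h4 : 0 ≤ α₂ * s * r := by positivity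
  have h5 : κ₁ * β * (5 * (β - 1) - (β + 1) * s) / r ^ 2 ≤ 5 * κ₁ * β * |β - 1| := by
    have hk : 0 ≤ κ₁ * β := mul_nonneg hκ₁ hβ
    have : κ₁ * β * (5 * (β - 1) - (β + 1) * s) ≤ 5 * κ₁ * β * |β - 1| := by
      nlinarith [le_abs_self (β - 1), mul_nonneg hk (mul_nonneg (by linarith : 0 ≤ β + 1) hs0),
        mul_le_mul_of_nonneg_left (le_abs_self (β - 1)) hk]
    calc _ ≤ 5 * κ₁ * β * |β - 1| / r ^ 2 := by gcongr
      _ = 5 * κ₁ * β * |β - 1| * (1 / r ^ 2) := by ring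
      _ ≤ 5 * κ₁ * β * |β - 1| := mul_le_of_le_one_right (by positivity) hinv
  unfold phi1DriftFactor
  nlinarith

lemma contDiffOn_phi1 (β : ℝ) : ContDiffOn ℝ (⊤ : ℕ∞) (phi1 β) {p | p.1 ≠ 0} := by
  intro p hp
  have habs : ContDiffAt ℝ (⊤ : ℕ∞) (fun q : ℝ × ℝ => |q.1|) p :=
    (contDiffAt_abs hp).comp p contDiffAt_fst
  have hne : |p.1| ≠ 0 := abs_ne_zero.2 hp
  exact (contDiffAt_const.mul ((contDiffAt_const.mul (habs.rpow_const_of_ne hne)).sub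
    ((contDiffAt_snd.pow 2).mul (habs.rpow_const_of_ne hne)))).contDiffWithinAt

lemma mem_U1_bounds {p : ℝ × ℝ} (hp : p ∈ U1) : 2 < |p.1| ∧ p.2 ^ 2 * |p.1| < 4 := by
  have h2 : 2 < |p.1| := by rw [abs_of_neg (by linarith [hp.1])]; linarith [hp.1]
  exact ⟨h2, sq_mul_lt_four (by linarith) hp.2⟩

lemma phi1_eq_mul (β : ℝ) {p : ℝ × ℝ} (hp : p.1 ≠ 0) :
    phi1 β p = 2 * |p.1| ^ β * (5 - p.2 ^ 2 * |p.1|) := by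
  rw [phi1, rpow_add_one (abs_ne_zero.2 hp)]; ring

lemma two_mul_rpow_lt_phi1 (β : ℝ) {p : ℝ × ℝ} (hp : p ∈ U1) : 2 * |p.1| ^ β < phi1 β p := by
  obtain ⟨h2, hs⟩ := mem_U1_bounds hp
  have hv : 0 < |p.1| ^ β := rpow_pos_of_pos (by linarith) β
  rw [phi1_eq_mul β (abs_pos.1 (by linarith))]
  nlinarith

lemma norm_eq_abs_fst_of_mem_U1 {p : ℝ × ℝ} (hp : p ∈ U1) : ‖p‖ = |p.1| := by
  obtain ⟨h2, hs⟩ := mem_U1_bounds hp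
  have : |p.2| ≤ |p.1| := by
    rw [← sq_le_sq₀ (abs_nonneg _) (abs_nonneg _), sq_abs]; nlinarith
  simp [Prod.norm_def, this]

lemma phi1_coercive {β : ℝ} (hβ : 0 < β) (M : ℝ) :
    ∃ R : ℝ, ∀ z ∈ U1, R < ‖z‖ → M < phi1 β z := by
  obtain ⟨R, hR⟩ := eventually_atTop.1 ((tendsto_rpow_atTop hβ).eventually_gt_atTop M)
  refine ⟨R, fun z hz hRz => ?_⟩
  rw [norm_eq_abs_fst_of_mem_U1 hz] at hRz
  linarith [hR _ hRz.le, two_mul_rpow_lt_phi1 β hz, rpow_nonneg (abs_nonneg z.1) β]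

lemma exists_Lop_phi1_le (a₁ a₂ α₁ α₂ κ₁ κ₂ β : ℝ) (hα₁ : 0 ≤ α₁) (hα₂ : 0 ≤ α₂)
    (hκ₁ : 0 ≤ κ₁) (hκ₂ : 0 < κ₂) (hβ : 0 ≤ β) (hβκ : 5 * α₁ * β ≤ 15 / 8 * κ₂) :
    ∃ D > 0, ∀ p ∈ U1,
      Lop a₁ a₂ α₁ α₂ κ₁ κ₂ (phi1 β) p ≤ -(κ₂ / 80) * phi1 β p + D := by
  obtain ⟨K, hK⟩ := phi1DriftFactor_le a₁ a₂ α₁ α₂ κ₁ κ₂ β (κ₂ / 8) hα₁ hα₂ hκ₁ hβ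
    (by linarith)
  obtain ⟨D, hD, hDK⟩ := exists_rpow_mul_sub_le hβ (by positivity : 0 < κ₂ / 4)
    (2 * K + κ₂ / 8)
  refine ⟨D, hD, fun p hp => ?_⟩
  obtain ⟨h2, hs⟩ := mem_U1_bounds hp
  have hx : p.1 < 0 := by linarith [hp.1]
  set r := |p.1|
  have hv : 0 ≤ r ^ β := by positivity
  have hF := mul_le_mul_of_nonneg_left
    (hK r (p.2 ^ 2 * r) h2 (by positivity) hs.le) (by positivity : (0:ℝ) ≤ 2 * r ^ β)
  have hvs : 0 ≤ r ^ β * (p.2 ^ 2 * r) := by positivity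
  rw [Lop_phi1_of_neg a₁ a₂ α₁ α₂ κ₁ κ₂ β hx, phi1_eq_mul β hx.ne]
  nlinarith [hDK r (by linarith)]

theorem statement2_general (a₁ a₂ α₁ α₂ κ₁ κ₂ σ δ β : ℝ)
    (hα₁ : 0 < α₁) (hα : α₁ < α₂) (hκ₁ : 0 ≤ κ₁) (hκ₂ : 0 < κ₂)
    (hσ : σ = (α₁ + α₂) / (2 * α₂)) (hδ : δ = κ₂ / (8 * α₁)) (hβ : β = (2 + σ) * δ) :
    IsLyapunovOn a₁ a₂ α₁ α₂ κ₁ κ₂ (phi1 β) U1 ∧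
      (∀ p ∈ U1, 2 * |p.1| ^ β < phi1 β p) ∧
      (∀ M : ℝ, ∃ R : ℝ, ∀ z ∈ U1, R < ‖z‖ → M < phi1 β z) ∧
      ∃ D₁ > (0:ℝ), ∀ p ∈ U1,
        Lop a₁ a₂ α₁ α₂ κ₁ κ₂ (phi1 β) p ≤ -(κ₂ / 80) * phi1 β p + D₁ := by
  have hα₂ : 0 < α₂ := hα₁.trans hα
  have hσ0 : 0 < σ := by rw [hσ]; positivity
  have hσ1 : σ ≤ 1 := by rw [hσ, div_le_one (by positivity)]; linarith
  have hβ0 : 0 < β := by rw [hβ, hδ]; positivity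
  have hβκ : 5 * α₁ * β ≤ 15 / 8 * κ₂ := by
    have : 5 * α₁ * β = 5 / 8 * (2 + σ) * κ₂ := by rw [hβ, hδ]; field_simp
    nlinarith
  have hsmooth : ContDiffOn ℝ (⊤ : ℕ∞) (phi1 β) U1 :=
    (contDiffOn_phi1 β).mono fun p hp => (hp.1.trans (by norm_num)).ne
  obtain ⟨D₁, hD₁, hdrift⟩ :=
    exists_Lop_phi1_le a₁ a₂ α₁ α₂ κ₁ κ₂ β hα₁.le hα₂.le hκ₁ hκ₂ hβ0.le hβκ
  exact ⟨⟨hsmooth, phi1_coercive hβ0, κ₂ / 80, by positivity, D₁, hD₁, hdrift⟩,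
    fun p hp => two_mul_rpow_lt_phi1 β hp, phi1_coercive hβ0, D₁, hD₁, hdrift⟩

/-- `φ₁` is a Lyapunov function on `U₁` (with `C₁ = 2`). -/
theorem statement2 (a₁ a₂ α₁ α₂ κ₁ κ₂ σ δ β : ℝ)
    (hα₁ : 0 < α₁) (hα : α₁ < α₂) (hκ₁ : 0 ≤ κ₁) (hκ₂ : 0 < κ₂) (hκ₂' : κ₂ < 4 * α₁)
    (hσ : σ = (α₁ + α₂) / (2 * α₂)) (hδ : δ = κ₂ / (8 * α₁)) (hβ : β = (2 + σ) * δ) :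
    IsLyapunovOn a₁ a₂ α₁ α₂ κ₁ κ₂ (phi1 β) U1 ∧
      (∀ p ∈ U1, 2 * |p.1| ^ β < phi1 β p) ∧
      (∀ M : ℝ, ∃ R : ℝ, ∀ z ∈ U1, R < ‖z‖ → M < phi1 β z) ∧
      ∃ D₁ > (0:ℝ), ∀ p ∈ U1,
        Lop a₁ a₂ α₁ α₂ κ₁ κ₂ (phi1 β) p ≤ -(κ₂ / 80) * phi1 β p + D₁ :=
  statement2_general a₁ a₂ α₁ α₂ κ₁ κ₂ σ δ β hα₁ hα hκ₁ hκ₂ hσ hδ hβ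
end

section
/- Let a₁, a₂, α₁, α₂ ∈ ℝ and κ₂ > 0. Define the smooth vector fields on ℝ²: X₀(x,y) = (a₁x − α₁x² + y², a₂y − α₂xy) and X₂(x,y) = (0, √κ₂). Then the iterated Lie bracket [X₂, [X₂, X₀]] is the constant vector field (x,y) ↦ (2κ₂, 0); in particular, for every z ∈ ℝ², the vectors X₂(z) and [X₂,[X₂,X₀]](z) span ℝ². -/
/-- The Lie bracket of two smooth vector fields on `ℝ²`:
`[V,W](z) = DW(z)(V(z)) − DV(z)(W(z))`. -/
noncomputable def lieBracket (V W : ℝ × ℝ → ℝ × ℝ) (z : ℝ × ℝ) : ℝ × ℝ :=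
  fderiv ℝ W z (V z) - fderiv ℝ V z (W z)

/-- The drift vector field `X₀`. -/
def X0 (a₁ a₂ α₁ α₂ : ℝ) (z : ℝ × ℝ) : ℝ × ℝ :=
  (a₁ * z.1 - α₁ * z.1 ^ 2 + z.2 ^ 2, a₂ * z.2 - α₂ * z.1 * z.2)

/-- The noise vector field `X₂ = √κ₂ ∂_y`. -/
noncomputable def X2 (κ₂ : ℝ) (_ : ℝ × ℝ) : ℝ × ℝ := (0, Real.sqrt κ₂)

/-!
Bracketing with a constant field `c` is differentiation in the direction `c`. Hence
`[X₂,[X₂,X₀]] = κ₂ ∂²_y X₀`, and `∂²_y X₀ = (2, 0)` since the only term of `X₀` quadratic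
in `y` is the `y²` in its first component.
-/

theorem lieBracket_const_left (c : ℝ × ℝ) (W : ℝ × ℝ → ℝ × ℝ) (z : ℝ × ℝ) :
    lieBracket (fun _ => c) W z = fderiv ℝ W z c := by
  simp [lieBracket]

theorem lieBracket_X2_left (κ₂ : ℝ) (W : ℝ × ℝ → ℝ × ℝ) (z : ℝ × ℝ) :
    lieBracket (X2 κ₂) W z = fderiv ℝ W z (0, Real.sqrt κ₂) :=
  lieBracket_const_left _ W z

theorem fderiv_X0_apply_vertical (a₁ a₂ α₁ α₂ s : ℝ) (z : ℝ × ℝ) :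
    fderiv ℝ (X0 a₁ a₂ α₁ α₂) z (0, s) = (2 * z.2 * s, (a₂ - α₂ * z.1) * s) := by
  have h₁ := hasFDerivAt_fst (𝕜 := ℝ) (p := z)
  have h₂ := hasFDerivAt_snd (𝕜 := ℝ) (p := z)
  have h : HasFDerivAt (X0 a₁ a₂ α₁ α₂) _ z :=
    (((h₁.const_mul a₁).sub ((h₁.pow 2).const_mul α₁)).add (h₂.pow 2)).prodMk
      ((h₂.const_mul a₂).sub ((h₁.const_mul α₂).mul h₂))
  rw [h.fderiv]
  simp only [Nat.add_one_sub_one, pow_one, nsmul_eq_mul, Nat.cast_ofNat,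
    ContinuousLinearMap.prod_apply, add_apply, sub_apply, smul_apply,
    ContinuousLinearMap.coe_fst', ContinuousLinearMap.coe_snd', smul_eq_mul, mul_zero, sub_self,
    zero_add, add_zero, Prod.mk.injEq, true_and]
  ring

theorem lieBracket_X2_X0 (a₁ a₂ α₁ α₂ κ₂ : ℝ) :
    lieBracket (X2 κ₂) (X0 a₁ a₂ α₁ α₂)
      = fun z => (2 * z.2 * Real.sqrt κ₂, (a₂ - α₂ * z.1) * Real.sqrt κ₂) := by
  funext z
  rw [lieBracket_X2_left, fderiv_X0_apply_vertical]

theorem lieBracket_X2_lieBracket_X2_X0 (a₁ a₂ α₁ α₂ κ₂ : ℝ) (hκ₂ : 0 ≤ κ₂) :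
    lieBracket (X2 κ₂) (lieBracket (X2 κ₂) (X0 a₁ a₂ α₁ α₂)) = fun _ => (2 * κ₂, 0) := by
  funext z
  have h₁ := hasFDerivAt_fst (𝕜 := ℝ) (p := z)
  have h₂ := hasFDerivAt_snd (𝕜 := ℝ) (p := z)
  have h : HasFDerivAt
      (fun z : ℝ × ℝ => (2 * z.2 * Real.sqrt κ₂, (a₂ - α₂ * z.1) * Real.sqrt κ₂)) _ z :=
    ((h₂.const_mul 2).mul_const _).prodMk
      (((hasFDerivAt_const a₂ z).sub (h₁.const_mul α₂)).mul_const _)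
  rw [lieBracket_X2_X0, lieBracket_X2_left, h.fderiv]
  simp only [ContinuousLinearMap.prod_apply, smul_apply, ContinuousLinearMap.coe_snd',
    ContinuousLinearMap.coe_fst', sub_apply, zero_apply, smul_eq_mul]
  rw [mul_left_comm, Real.mul_self_sqrt hκ₂]
  simp

theorem Submodule.span_pair_vertical_horizontal_eq_top {K : Type*} [Field K] {b c : K}
    (hb : b ≠ 0) (hc : c ≠ 0) : Submodule.span K {((0 : K), b), (c, 0)} = ⊤ := by
  refine Submodule.eq_top_iff'.mpr fun v => Submodule.mem_span_pair.mpr ⟨v.2 / b, v.1 / c, ?_⟩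
  ext <;> simp [hb, hc]

/-- `[X₂,[X₂,X₀]]` is the constant vector field `(2κ₂, 0)`, and together with
`X₂` it spans `ℝ²` at every point. -/
theorem statement11 (a₁ a₂ α₁ α₂ κ₂ : ℝ) (hκ₂ : 0 < κ₂) :
    (lieBracket (X2 κ₂) (lieBracket (X2 κ₂) (X0 a₁ a₂ α₁ α₂))
        = fun _ : ℝ × ℝ => ((2 * κ₂, 0) : ℝ × ℝ)) ∧
      ∀ z : ℝ × ℝ,
        Submodule.span ℝ
          ({X2 κ₂ z, lieBracket (X2 κ₂) (lieBracket (X2 κ₂) (X0 a₁ a₂ α₁ α₂)) z} :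
            Set (ℝ × ℝ)) = ⊤ := by
  have hbracket := lieBracket_X2_lieBracket_X2_X0 a₁ a₂ α₁ α₂ κ₂ hκ₂.le
  refine ⟨hbracket, fun z => ?_⟩
  rw [hbracket]
  exact Submodule.span_pair_vertical_horizontal_eq_top (Real.sqrt_pos.mpr hκ₂).ne' (by positivity)
end

section
/- Let a₁, a₂ ∈ ℝ, 0 < α₁ < α₂, κ₁ ≥ 0 and κ₂ > 0. For every z₀ = (x₀, y₀) ∈ ℝ², the closure of A(z₀) contains the closed half-plane H(z₀) = {(u,v) ∈ ℝ² : u ≥ x₀}. -/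
/-- `Reachable a₁ a₂ α₁ α₂ κ₁ κ₂ z₀ w`: the point `w` can be reached from `z₀` by
concatenating finitely many integral curves of the control system
`ẋ = a₁x − α₁x² + y² + κ₁u`, `ẏ = a₂y − α₂xy + κ₂v` with constant controls `(u,v)`,
each run for a nonnegative time. -/
inductive Reachable (a₁ a₂ α₁ α₂ κ₁ κ₂ : ℝ) : ℝ × ℝ → ℝ × ℝ → Prop
  | refl (z : ℝ × ℝ) : Reachable a₁ a₂ α₁ α₂ κ₁ κ₂ z z
  | step {z w w' : ℝ × ℝ} (u v T : ℝ) (γ : ℝ → ℝ × ℝ) (hT : 0 ≤ T)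
      (hode : ∀ s ∈ Set.Icc (0:ℝ) T,
        HasDerivAt γ
          (a₁ * (γ s).1 - α₁ * (γ s).1 ^ 2 + (γ s).2 ^ 2 + κ₁ * u,
            a₂ * (γ s).2 - α₂ * (γ s).1 * (γ s).2 + κ₂ * v) s)
      (h0 : γ 0 = w) (hend : γ T = w')
      (hprev : Reachable a₁ a₂ α₁ α₂ κ₁ κ₂ z w) :
      Reachable a₁ a₂ α₁ α₂ κ₁ κ₂ z w'

/-!
A strong constant vertical control makes the flow follow a vertical segment, with a horizontal
drift that is as small as we like: `y` can be steered to any value at arbitrarily small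
horizontal cost. At a large height the free flow has `ẋ = y² + O(1)`, so it drives `x` to any
larger abscissa before leaving a ball in which this estimate holds. Raising `y`, letting `x` run
to the target abscissa and then steering `y` to the target value reaches every point of the
half-plane `x ≥ x₀` up to an arbitrarily small error.
-/

open Set Metric
open scoped NNReal

section IntegralCurve

variable {E : Type*} [NormedAddCommGroup E] [NormedSpace ℝ E] [CompleteSpace E]
  {F : E → E} {z : E} {K : ℝ≥0} {R C T : ℝ}

theorem exists_hasDerivAt_mem_closedBall (hF : LipschitzOnWith K F (closedBall z R))
    (hC : ∀ p ∈ closedBall z R, ‖F p‖ ≤ C) (hR : 0 ≤ R) (hT : 0 ≤ T) (hCT : C * T < R) :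
    ∃ γ : ℝ → E, γ 0 = z ∧
      ∀ t ∈ Icc 0 T, HasDerivAt γ (F (γ t)) t ∧ γ t ∈ closedBall z R := by
  have hC₀ : 0 ≤ C := (norm_nonneg _).trans (hC z (mem_closedBall_self hR))
  -- solve on a slightly longer interval `[-T', T']`, so that `[0, T]` lies in its interior
  set T' := T + (R - C * T) / (C + 1)
  have hTT' : T < T' := lt_add_of_pos_right T (by have := sub_pos.2 hCT; positivity)
  have hCT' : C * T' < R := by
    have : C * ((R - C * T) / (C + 1)) < R - C * T := by
      rw [mul_div_assoc', div_lt_iff₀ (by positivity)]; nlinarith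
    linarith
  have hT'₀ : 0 < T' := hT.trans_lt hTT'
  have hPL : IsPicardLindelof (fun _ ↦ F) (tmin := -T') (tmax := T')
      ⟨0, by simp [hT'₀.le]⟩ z ⟨R, hR⟩ 0 ⟨C, hC₀⟩ K :=
    .of_time_independent hC hF (by
      change C * max (T' - 0) (0 - -T') ≤ R - 0
      simpa using hCT'.le)
  obtain ⟨γ, hγ₀, hγ⟩ := hPL.exists_eq_forall_mem_Icc_hasDerivWithinAt₀
  have hγ' : ∀ t ∈ Icc 0 T, HasDerivAt γ (F (γ t)) t := fun t ht ↦
    (hγ t ⟨by linarith [ht.1], by linarith [ht.2]⟩).hasDerivAt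
      (Icc_mem_nhds (by linarith [ht.1]) (by linarith [ht.2]))
  -- the curve cannot leave the ball before time `T'`, since it moves at speed at most `C < R / T'`
  have hconf : ∀ t ∈ Icc 0 T, ‖γ t - z‖ ≤ R / T' * t := by
    refine image_norm_le_of_norm_deriv_right_lt_deriv_boundary'
      (fun t ht ↦ ((hγ' t ht).sub_const z).continuousAt.continuousWithinAt)
      (fun t ht ↦ ((hγ' t (Ico_subset_Icc_self ht)).sub_const z).hasDerivWithinAt)
      (by simp [hγ₀]) (by fun_prop)
      (fun t _ ↦ ((hasDerivAt_id t).const_mul (R / T')).hasDerivWithinAt) ?_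
    intro t ht hbd
    have hmem : γ t ∈ closedBall z R := by
      rw [mem_closedBall_iff_norm, hbd]
      calc R / T' * t ≤ R / T' * T' := by gcongr; linarith [ht.2]
        _ = R := div_mul_cancel₀ R hT'₀.ne'
    calc ‖F (γ t)‖ ≤ C := hC _ hmem
      _ < R / T' * 1 := by rw [mul_one, lt_div_iff₀ hT'₀]; exact hCT'
  refine ⟨γ, hγ₀, fun t ht ↦ ⟨hγ' t ht, ?_⟩⟩
  rw [mem_closedBall_iff_norm]
  calc ‖γ t - z‖ ≤ R / T' * t := hconf t ht
    _ ≤ R / T' * T' := by gcongr; linarith [ht.2]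
    _ = R := div_mul_cancel₀ R hT'₀.ne'

theorem exists_hasDerivAt_norm_sub_le {c : E} {B : ℝ} (hF : LipschitzOnWith K F (closedBall z R))
    (hB : ∀ p ∈ closedBall z R, ‖F p - c‖ ≤ B) (hR : 0 ≤ R) (hT : 0 ≤ T)
    (hBT : (‖c‖ + B) * T < R) :
    ∃ γ : ℝ → E, γ 0 = z ∧ (∀ t ∈ Icc 0 T, HasDerivAt γ (F (γ t)) t) ∧
      ‖γ T - (z + T • c)‖ ≤ B * T := by
  have hC : ∀ p ∈ closedBall z R, ‖F p‖ ≤ ‖c‖ + B := fun p hp ↦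
    (norm_le_norm_add_norm_sub' (F p) c).trans (by linarith [hB p hp])
  obtain ⟨γ, hγ₀, hγ⟩ := exists_hasDerivAt_mem_closedBall hF hC hR hT hBT
  refine ⟨γ, hγ₀, fun t ht ↦ (hγ t ht).1, ?_⟩
  have hderiv : ∀ t ∈ Icc 0 T,
      HasDerivWithinAt (fun s ↦ γ s - s • c) (F (γ t) - c) (Icc 0 T) t := fun t ht ↦ by
    simpa using ((hγ t ht).1.fun_sub ((hasDerivAt_id t).smul_const c)).hasDerivWithinAt
  have := norm_image_sub_le_of_norm_deriv_le_segment' hderiv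
    (fun t ht ↦ hB _ (hγ t (Ico_subset_Icc_self ht)).2) T ⟨hT, le_rfl⟩
  rw [hγ₀] at this
  convert this using 2 <;> simp; abel

end IntegralCurve

theorem HasDerivAt.fst {γ : ℝ → ℝ × ℝ} {γ' : ℝ × ℝ} {t : ℝ} (h : HasDerivAt γ γ' t) :
    HasDerivAt (fun s ↦ (γ s).1) γ'.1 t :=
  (ContinuousLinearMap.fst ℝ ℝ ℝ).hasFDerivAt.comp_hasDerivAt t h

theorem abs_le_abs_add_of_mem_closedBall {z p : ℝ × ℝ} {R : ℝ} (hp : p ∈ closedBall z R) :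
    |p.1| ≤ |z.1| + R ∧ |p.2| ≤ |z.2| + R := by
  rw [mem_closedBall, Prod.dist_eq, max_le_iff, Real.dist_eq, Real.dist_eq] at hp
  exact ⟨by linarith [abs_sub_abs_le_abs_sub p.1 z.1],
    by linarith [abs_sub_abs_le_abs_sub p.2 z.2]⟩

theorem abs_mul_sub_mul_sq_le {a α x X : ℝ} (hx : |x| ≤ X) :
    |a * x - α * x ^ 2| ≤ |a| * X + |α| * X ^ 2 := by
  have hx2 : x ^ 2 ≤ X ^ 2 := sq_le_sq' (abs_le.1 hx).1 (abs_le.1 hx).2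
  calc |a * x - α * x ^ 2| ≤ |a * x| + |α * x ^ 2| := abs_sub _ _
    _ = |a| * |x| + |α| * x ^ 2 := by rw [abs_mul, abs_mul, abs_sq]
    _ ≤ |a| * X + |α| * X ^ 2 := by gcongr

theorem abs_mul_sub_mul_sq_add_sq_le {a α x y X Y : ℝ} (hx : |x| ≤ X) (hy : |y| ≤ Y) :
    |a * x - α * x ^ 2 + y ^ 2| ≤ |a| * X + |α| * X ^ 2 + Y ^ 2 := by
  have hy2 : y ^ 2 ≤ Y ^ 2 := sq_le_sq' (abs_le.1 hy).1 (abs_le.1 hy).2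
  calc _ ≤ |a * x - α * x ^ 2| + |y ^ 2| := abs_add_le _ _
    _ ≤ _ := by rw [abs_sq]; linarith [abs_mul_sub_mul_sq_le (a := a) (α := α) hx]

theorem abs_mul_sub_mul_mul_le {a α x y X Y : ℝ} (hx : |x| ≤ X) (hy : |y| ≤ Y) :
    |a * y - α * x * y| ≤ (|a| + |α| * X) * Y := by
  rw [← sub_mul, abs_mul]
  have : |a - α * x| ≤ |a| + |α| * X :=
    (abs_sub _ _).trans (by rw [abs_mul]; gcongr)
  exact mul_le_mul this hy (abs_nonneg y) ((abs_nonneg _).trans this)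

def controlField (a₁ a₂ α₁ α₂ κ₁ κ₂ u v : ℝ) (p : ℝ × ℝ) : ℝ × ℝ :=
  (a₁ * p.1 - α₁ * p.1 ^ 2 + p.2 ^ 2 + κ₁ * u, a₂ * p.2 - α₂ * p.1 * p.2 + κ₂ * v)

theorem exists_lipschitzOnWith_controlField (a₁ a₂ α₁ α₂ κ₁ κ₂ u v : ℝ) (z : ℝ × ℝ) (R : ℝ) :
    ∃ K, LipschitzOnWith K (controlField a₁ a₂ α₁ α₂ κ₁ κ₂ u v) (closedBall z R) :=
  (ContDiff.contDiffOn (by unfold controlField; fun_prop)).exists_lipschitzOnWith one_ne_zero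
    (convex_closedBall z R) (isCompact_closedBall z R)

section ControlSystem

variable {a₁ a₂ α₁ α₂ κ₁ κ₂ : ℝ}

theorem Reachable.trans {z w w' : ℝ × ℝ} (h₁ : Reachable a₁ a₂ α₁ α₂ κ₁ κ₂ z w)
    (h₂ : Reachable a₁ a₂ α₁ α₂ κ₁ κ₂ w w') : Reachable a₁ a₂ α₁ α₂ κ₁ κ₂ z w' := by
  induction h₂ with
  | refl => exact h₁
  | step u v T γ hT hode h0 hend _ ih => exact .step u v T γ hT hode h0 hend ih

theorem Reachable.of_hasDerivAt {γ : ℝ → ℝ × ℝ} {u v T : ℝ} (hT : 0 ≤ T)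
    (hγ : ∀ s ∈ Icc 0 T, HasDerivAt γ (controlField a₁ a₂ α₁ α₂ κ₁ κ₂ u v (γ s)) s) :
    Reachable a₁ a₂ α₁ α₂ κ₁ κ₂ (γ 0) (γ T) :=
  .step u v T γ hT hγ rfl rfl (.refl _)

theorem exists_reachable_dist_le (hκ₂ : κ₂ ≠ 0) (z : ℝ × ℝ) (y : ℝ) {ε : ℝ} (hε : 0 < ε) :
    ∃ w, Reachable a₁ a₂ α₁ α₂ κ₁ κ₂ z w ∧ dist w (z.1, y) ≤ ε := by
  set R := |y - z.2| + 1
  set X := |z.1| + R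
  set Y := |z.2| + R
  set B := |a₁| * X + |α₁| * X ^ 2 + Y ^ 2 + (|a₂| + |α₂| * X) * Y
  have hB : 0 ≤ B := by positivity
  set T := min ε (1 / 2) / (B + 1)
  have hT : 0 < T := by positivity
  have hBT : B * T ≤ min ε (1 / 2) := by
    rw [← mul_div_assoc, div_le_iff₀ (by positivity)]
    nlinarith [lt_min hε one_half_pos]
  -- a strong vertical control makes the flow follow the vertical segment from `z` to `(z.1, y)`
  -- up to the drift `B * T` of the uncontrolled field
  set c : ℝ × ℝ := (0, (y - z.2) / T)
  have hdrift : ∀ p ∈ closedBall z R,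
      ‖controlField a₁ a₂ α₁ α₂ κ₁ κ₂ 0 ((y - z.2) / (T * κ₂)) p - c‖ ≤ B := by
    intro p hp
    obtain ⟨hpX, hpY⟩ := abs_le_abs_add_of_mem_closedBall hp
    have h₁ : |a₁ * p.1 - α₁ * p.1 ^ 2 + p.2 ^ 2| ≤ |a₁| * X + |α₁| * X ^ 2 + Y ^ 2 :=
      abs_mul_sub_mul_sq_add_sq_le hpX hpY
    have h₂ : |a₂ * p.2 - α₂ * p.1 * p.2| ≤ (|a₂| + |α₂| * X) * Y :=
      abs_mul_sub_mul_mul_le hpX hpY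
    have hκ : κ₂ * ((y - z.2) / (T * κ₂)) = (y - z.2) / T := by field_simp
    simp only [controlField, c, Prod.norm_def, Prod.fst_sub, Prod.snd_sub, Real.norm_eq_abs, hκ,
      mul_zero, add_zero, sub_zero, add_sub_cancel_right, max_le_iff]
    have : 0 ≤ |a₁| * X + |α₁| * X ^ 2 + Y ^ 2 := by positivity
    have : 0 ≤ (|a₂| + |α₂| * X) * Y := by positivity
    constructor <;> linarith
  have hc : ‖c‖ * T = |y - z.2| := by
    simp only [c, Prod.norm_def, norm_zero, Real.norm_eq_abs, abs_div, abs_of_pos hT]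
    rw [max_eq_right (by positivity), div_mul_cancel₀ _ hT.ne']
  obtain ⟨K, hK⟩ :=
    exists_lipschitzOnWith_controlField a₁ a₂ α₁ α₂ κ₁ κ₂ 0 ((y - z.2) / (T * κ₂)) z R
  obtain ⟨γ, hγ₀, hγ, hγT⟩ := exists_hasDerivAt_norm_sub_le hK hdrift (by positivity) hT.le
    (by rw [add_mul, hc]; linarith [min_le_right ε (1 / 2)])
  refine ⟨γ T, hγ₀ ▸ Reachable.of_hasDerivAt hT.le hγ, ?_⟩
  have hend : z + T • c = (z.1, y) := by
    ext <;> simp [c, mul_div_cancel₀ _ hT.ne']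
  rw [dist_eq_norm, ← hend]
  linarith [min_le_left ε (1 / 2)]


theorem exists_forall_reachable_fst_eq (x₁ x₂ : ℝ) :
    ∃ W, ∀ z : ℝ × ℝ, x₁ ≤ z.1 → z.1 ≤ x₂ → W ≤ z.2 →
      ∃ w, Reachable a₁ a₂ α₁ α₂ κ₁ κ₂ z w ∧ w.1 = x₂ := by
  set R := |x₂ - x₁| + 1
  set X := |x₁| + |x₂| + R
  set K₁ := |a₁| * X + |α₁| * X ^ 2
  set K₂ := |a₂| + |α₂| * X
  have hR : 1 ≤ R := le_add_of_nonneg_left (abs_nonneg _)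
  have hK₁ : 0 ≤ K₁ := by positivity
  have hK₂ : 0 ≤ K₂ := by positivity
  refine ⟨8 * R ^ 2 + 4 * R * K₁ + 2 * R * K₂ + R, fun z hz₁ hz₂ hW ↦ ?_⟩
  set F := controlField a₁ a₂ α₁ α₂ κ₁ κ₂ 0 0
  set V := z.2 + R
  have hV : 8 * R ^ 2 + 4 * R * K₁ + 2 * R * K₂ + 2 * R ≤ V := by linarith
  have hV₂ : 2 * R ≤ V := by
    nlinarith [mul_nonneg (zero_le_one.trans hR) hK₁, mul_nonneg (zero_le_one.trans hR) hK₂]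
  have hV₀ : 0 < V := by linarith
  have hball : ∀ p ∈ closedBall z R, |p.1| ≤ X ∧ V - 2 * R ≤ p.2 ∧ |p.2| ≤ V := by
    intro p hp
    rw [mem_closedBall, Prod.dist_eq, max_le_iff, Real.dist_eq, Real.dist_eq, abs_le,
      abs_le] at hp
    refine ⟨abs_le.2 ⟨?_, ?_⟩, by linarith, abs_le.2 ⟨?_, ?_⟩⟩ <;>
      linarith [neg_abs_le x₁, le_abs_self x₂, abs_nonneg x₂, abs_nonneg x₁]
  set C := V ^ 2 + K₁ + K₂ * V
  have hC : 0 < C := by positivity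
  have hFC : ∀ p ∈ closedBall z R, ‖F p‖ ≤ C := by
    intro p hp
    obtain ⟨hpX, -, hpV⟩ := hball p hp
    have hx : |a₁ * p.1 - α₁ * p.1 ^ 2 + p.2 ^ 2| ≤ K₁ + V ^ 2 :=
      abs_mul_sub_mul_sq_add_sq_le hpX hpV
    have hy : |a₂ * p.2 - α₂ * p.1 * p.2| ≤ K₂ * V := abs_mul_sub_mul_mul_le hpX hpV
    have : 0 ≤ K₂ * V := by positivity
    simp only [F, controlField, Prod.norm_def, Real.norm_eq_abs, mul_zero, add_zero, max_le_iff]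
    constructor <;> nlinarith
  set m := (V - 2 * R) ^ 2 - K₁
  have hFm : ∀ p ∈ closedBall z R, m ≤ (F p).1 := by
    intro p hp
    obtain ⟨hpX, hpV, -⟩ := hball p hp
    have hx : |a₁ * p.1 - α₁ * p.1 ^ 2| ≤ K₁ := abs_mul_sub_mul_sq_le hpX
    have : (V - 2 * R) ^ 2 ≤ p.2 ^ 2 := pow_le_pow_left₀ (by linarith) hpV 2
    simp only [F, controlField, mul_zero, add_zero]
    linarith [neg_abs_le (a₁ * p.1 - α₁ * p.1 ^ 2)]
  set T := (R - 1 / 2) / C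
  have hT : 0 ≤ T := div_nonneg (by linarith) hC.le
  -- the choice of `W`: within the time `T` during which the flow surely stays in the ball,
  -- the speed `ẋ ≥ m` carries `x` across the whole interval `[x₁, x₂]`
  have hmT : R - 1 ≤ m * T := by
    rw [mul_div_assoc', le_div_iff₀ hC]
    nlinarith [mul_nonneg hK₁ (by linarith : (0 : ℝ) ≤ V - 1),
      mul_nonneg hK₂ (by linarith : (0 : ℝ) ≤ R - 1)]
  obtain ⟨K, hK⟩ := exists_lipschitzOnWith_controlField a₁ a₂ α₁ α₂ κ₁ κ₂ 0 0 z R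
  obtain ⟨γ, hγ₀, hγ⟩ := exists_hasDerivAt_mem_closedBall hK hFC (by positivity) hT
    (by rw [mul_div_cancel₀ _ hC.ne']; linarith)
  have hcont : ContinuousOn (fun t ↦ (γ t).1) (Icc 0 T) := fun t ht ↦
    (hγ t ht).1.fst.continuousAt.continuousWithinAt
  have hgain : m * (T - 0) ≤ (γ T).1 - (γ 0).1 := by
    refine (convex_Icc 0 T).mul_sub_le_image_sub_of_le_deriv hcont ?_ ?_
      0 ⟨le_rfl, hT⟩ T ⟨hT, le_rfl⟩ hT <;> rw [interior_Icc]
    · exact fun t ht ↦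
        (hγ t (Ioo_subset_Icc_self ht)).1.fst.differentiableAt.differentiableWithinAt
    · intro t ht
      obtain ⟨hγt, hγt_mem⟩ := hγ t (Ioo_subset_Icc_self ht)
      rw [hγt.fst.deriv]
      exact hFm _ hγt_mem
  obtain ⟨t₀, ht₀, hγt₀⟩ := intermediate_value_Icc hT hcont
    (⟨by rw [hγ₀]; exact hz₂, by rw [hγ₀] at hgain; linarith [le_abs_self (x₂ - x₁)]⟩ :
      x₂ ∈ Icc (γ 0).1 (γ T).1)
  exact ⟨γ t₀, hγ₀ ▸ Reachable.of_hasDerivAt ht₀.1 fun s hs ↦ (hγ s ⟨hs.1, hs.2.trans ht₀.2⟩).1,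
    hγt₀⟩

end ControlSystem

theorem statement12_general (a₁ a₂ α₁ α₂ κ₁ κ₂ : ℝ) (hκ₂ : 0 < κ₂) (z₀ : ℝ × ℝ) :
    {p : ℝ × ℝ | z₀.1 ≤ p.1}
      ⊆ closure {w : ℝ × ℝ | Reachable a₁ a₂ α₁ α₂ κ₁ κ₂ z₀ w} := by
  intro p hp
  refine Metric.mem_closure_iff.2 fun ε hε ↦ ?_
  have hε₃ : 0 < ε / 3 := by positivity
  obtain ⟨W, hW⟩ := exists_forall_reachable_fst_eq (a₁ := a₁) (a₂ := a₂) (α₁ := α₁)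
    (α₂ := α₂) (κ₁ := κ₁) (κ₂ := κ₂) (z₀.1 - ε / 3) (p.1 + ε / 3)
  obtain ⟨z₁, hz₀₁, hz₁⟩ := exists_reachable_dist_le hκ₂.ne' z₀ (W + ε / 3) hε₃
  rw [Prod.dist_eq, max_le_iff, Real.dist_eq, Real.dist_eq, abs_le, abs_le] at hz₁
  obtain ⟨z₂, hz₁₂, hz₂⟩ := hW z₁ (by linarith) (by linarith [show z₀.1 ≤ p.1 from hp])
    (by linarith)
  obtain ⟨z₃, hz₂₃, hz₃⟩ := exists_reachable_dist_le hκ₂.ne' z₂ p.2 hε₃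
  refine ⟨z₃, (hz₀₁.trans hz₁₂).trans hz₂₃, ?_⟩
  have hp₂ : dist (z₂.1, p.2) p = ε / 3 := by
    rw [Prod.dist_eq, hz₂, Real.dist_eq, Real.dist_eq]; simp [hε₃.le]
  calc dist p z₃ ≤ dist z₃ (z₂.1, p.2) + dist (z₂.1, p.2) p := by
        rw [dist_comm]; exact dist_triangle _ _ _
    _ ≤ ε / 3 + ε / 3 := by rw [hp₂]; linarith
    _ < ε := by linarith

/-- the closure of the accessibility set `A(z₀)` contains the closed
half-plane `{(u,v) : u ≥ x₀}`. -/
theorem statement12 (a₁ a₂ α₁ α₂ κ₁ κ₂ : ℝ) (hα₁ : 0 < α₁) (hα : α₁ < α₂)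
    (hκ₁ : 0 ≤ κ₁) (hκ₂ : 0 < κ₂) (z₀ : ℝ × ℝ) :
    {p : ℝ × ℝ | z₀.1 ≤ p.1}
      ⊆ closure {w : ℝ × ℝ | Reachable a₁ a₂ α₁ α₂ κ₁ κ₂ z₀ w} :=
  statement12_general a₁ a₂ α₁ α₂ κ₁ κ₂ hκ₂ z₀
end

section
/- Let a₁, a₂ ∈ ℝ and α₁ > α₂ > 0, and let ξ > 0 satisfy 1/ξ² < α₁ − α₂. Then there exists M > 0 such that U_{ξ,M} is invariant for the planar ODE: for every b ∈ (0, ∞] and every differentiable curve z = (x, y) : [0, b) → ℝ² satisfying x′(t) = a₁x(t) − α₁x(t)² + y(t)² and y′(t) = a₂y(t) − α₂x(t)y(t) for all t ∈ [0, b) with z(0) ∈ U_{ξ,M}, one has z(t) ∈ U_{ξ,M} for all t ∈ [0, b). -/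
/-!
The wedge `U_{ξ,M}` is cut out by three affine barriers: `x + M < 0`, `x + ξy < 0` and
`x − ξy < 0`. It is invariant as soon as the field points strictly inward wherever the closed wedge
meets one of them. On the vertical side `x = −M` we have `y² ≤ M²/ξ²`, so
`x′ ≤ −M (a₁ + (α₁ − 1/ξ²) M)`; on the slanted sides `y = ∓x/ξ`, and the derivative of the
barrier is `x ((a₁ − a₂) − (α₁ − α₂ − 1/ξ²) x)`. Both are negative once `M` is large, because
`α₁ − 1/ξ² > α₁ − α₂ − 1/ξ² > 0`.
-/

/-- The wedge region `U_{ξ,M} = {(x,y) : x < −M and ξ|y| < −x}`. -/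
def Uxi (ξ M : ℝ) : Set (ℝ × ℝ) := {p : ℝ × ℝ | p.1 < -M ∧ ξ * |p.2| < -p.1}

open Set Filter Topology

theorem HasDerivAt.nonneg_of_isMaxOn_Icc {f : ℝ → ℝ} {a τ d : ℝ} (haτ : a < τ)
    (hmax : IsMaxOn f (Icc a τ) τ) (hf : HasDerivAt f d τ) : 0 ≤ d := by
  have hcone : a - τ ∈ posTangentConeAt (Icc a τ) τ :=
    sub_mem_posTangentConeAt_of_segment_subset (by rw [segment_eq_uIcc, uIcc_of_ge haτ.le])
  have := hmax.localize.hasFDerivWithinAt_nonpos hf.hasDerivWithinAt.hasFDerivWithinAt hcone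
  simp only [ContinuousLinearMap.toSpanSingleton_apply, smul_eq_mul] at this
  nlinarith

/-- At the first time `τ` one of the functions reaches `0`, it is maximal on `[a, τ]`, so its
derivative there is `≥ 0`; this contradicts the hypothesis `hzero`. -/
theorem forall_neg_of_deriv_neg_at_zero {ι : Type*} [Finite ι] {f f' : ι → ℝ → ℝ} {a t : ℝ}
    (hf : ∀ i, ∀ s ∈ Icc a t, HasDerivAt (f i) (f' i s) s)
    (hzero : ∀ s ∈ Icc a t, ∀ j, (∀ i, f i s ≤ 0) → f j s = 0 → f' j s < 0)
    (ha : ∀ i, f i a < 0) : ∀ s ∈ Icc a t, ∀ i, f i s < 0 := by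
  by_contra! hbad
  set A := ⋃ i, Icc a t ∩ f i ⁻¹' Ici 0
  have hA : IsClosed A := isClosed_iUnion_of_finite fun i =>
    ContinuousOn.preimage_isClosed_of_isClosed
      (fun s hs => (hf i s hs).continuousAt.continuousWithinAt) isClosed_Icc isClosed_Ici
  obtain ⟨s, hs, i, hi⟩ := hbad
  have hAne : A.Nonempty := ⟨s, mem_iUnion.2 ⟨i, hs, hi⟩⟩
  have hAbdd : BddBelow A := ⟨a, fun s hs => by obtain ⟨i, hs, -⟩ := mem_iUnion.1 hs; exact hs.1⟩
  obtain ⟨j, hτ, hjτ⟩ := mem_iUnion.1 (hA.csInf_mem hAne hAbdd)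
  set τ := sInf A
  have hbefore : ∀ s ∈ Ico a τ, ∀ i, f i s < 0 := fun s hs i => by
    by_contra! h
    exact (csInf_le hAbdd (mem_iUnion.2 ⟨i, ⟨hs.1, hs.2.le.trans hτ.2⟩, h⟩)).not_gt hs.2
  have haτ : a < τ := hτ.1.lt_of_ne fun h => (ha j).not_ge (h ▸ hjτ)
  have hτle : ∀ i, f i τ ≤ 0 := fun i =>
    le_of_tendsto ((hf i τ hτ).continuousAt.tendsto.mono_left nhdsWithin_le_nhds)
      (eventually_of_mem (Ioo_mem_nhdsLT haτ) fun s hs => (hbefore s ⟨hs.1.le, hs.2⟩ i).le)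
  have hjτ0 : f j τ = 0 := le_antisymm (hτle j) hjτ
  have hmax : IsMaxOn (f j) (Icc a τ) τ := fun s hs => by
    show f j s ≤ f j τ
    rw [hjτ0]
    rcases hs.2.lt_or_eq with h | rfl
    · exact (hbefore s ⟨hs.1, h⟩ j).le
    · exact hτle j
  exact (hzero τ hτ j hτle hjτ0).not_ge ((hf j τ hτ).nonneg_of_isMaxOn_Icc haτ hmax)

def wedgeSlope (ξ : ℝ) : Fin 3 → ℝ := ![0, ξ, -ξ]

def wedgeBarrier (ξ M : ℝ) (i : Fin 3) (p : ℝ × ℝ) : ℝ :=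
  p.1 + wedgeSlope ξ i * p.2 + ![M, 0, 0] i

section WedgeBarrier

variable {ξ M : ℝ} {p : ℝ × ℝ}

@[simp] theorem wedgeSlope_zero : wedgeSlope ξ 0 = 0 := rfl

@[simp] theorem wedgeSlope_one : wedgeSlope ξ 1 = ξ := rfl

@[simp] theorem wedgeSlope_two : wedgeSlope ξ 2 = -ξ := rfl

@[simp] theorem wedgeBarrier_zero : wedgeBarrier ξ M 0 p = p.1 + M := by simp [wedgeBarrier]

@[simp] theorem wedgeBarrier_one : wedgeBarrier ξ M 1 p = p.1 + ξ * p.2 := by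
  simp [wedgeBarrier]

@[simp] theorem wedgeBarrier_two : wedgeBarrier ξ M 2 p = p.1 + -ξ * p.2 := by
  simp [wedgeBarrier]

theorem forall_wedgeBarrier_iff {P : ℝ → Prop} :
    (∀ i, P (wedgeBarrier ξ M i p)) ↔ P (p.1 + M) ∧ P (p.1 + ξ * p.2) ∧ P (p.1 + -ξ * p.2) := by
  simp [Fin.forall_fin_succ]

theorem mem_Uxi_iff (hξ : 0 ≤ ξ) : p ∈ Uxi ξ M ↔ ∀ i, wedgeBarrier ξ M i p < 0 := by
  have habs : ξ * |p.2| = |ξ * p.2| := by rw [abs_mul, abs_of_nonneg hξ]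
  rw [forall_wedgeBarrier_iff (P := (· < 0))]
  simp only [Uxi, Set.mem_ofPred_eq, habs, abs_lt]
  constructor <;> intro h <;> refine ⟨by linarith, by linarith, by linarith⟩

theorem le_and_sq_le_of_forall_wedgeBarrier_nonpos (hp : ∀ i, wedgeBarrier ξ M i p ≤ 0) :
    p.1 ≤ -M ∧ (ξ * p.2) ^ 2 ≤ p.1 ^ 2 := by
  obtain ⟨h0, h1, h2⟩ := forall_wedgeBarrier_iff (P := (· ≤ 0)).1 hp
  exact ⟨by linarith, by nlinarith⟩

theorem HasDerivAt.wedgeBarrier {z : ℝ → ℝ × ℝ} {z' : ℝ × ℝ} {s : ℝ} (hz : HasDerivAt z z' s)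
    (i : Fin 3) :
    HasDerivAt (fun s => wedgeBarrier ξ M i (z s)) (z'.1 + wedgeSlope ξ i * z'.2) s := by
  have hx : HasDerivAt (fun s => (z s).1) z'.1 s := hz.fst
  have hy : HasDerivAt (fun s => (z s).2) z'.2 s := hz.snd
  exact (hx.add (hy.const_mul _)).add_const _

end WedgeBarrier

theorem vertical_field_neg {a₁ α₁ ξ x y : ℝ} (hξ : ξ ≠ 0) (hx : x < 0)
    (hy : (ξ * y) ^ 2 ≤ x ^ 2) (h : -a₁ < (α₁ - 1 / ξ ^ 2) * -x) :
    a₁ * x - α₁ * x ^ 2 + y ^ 2 < 0 := by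
  have hy' : y ^ 2 ≤ x ^ 2 / ξ ^ 2 := by
    rw [le_div_iff₀ (by positivity)]
    linarith
  calc a₁ * x - α₁ * x ^ 2 + y ^ 2 ≤ x * (a₁ + (α₁ - 1 / ξ ^ 2) * -x) := by
        have : x * ((α₁ - 1 / ξ ^ 2) * -x) = -α₁ * x ^ 2 + x ^ 2 / ξ ^ 2 := by ring
        nlinarith
    _ < 0 := mul_neg_of_neg_of_pos hx (by linarith)

theorem slanted_field_neg {a₁ a₂ α₁ α₂ η x y : ℝ} (hη : η ≠ 0) (hx : x < 0)
    (hside : x + η * y = 0) (h : a₂ - a₁ < (α₁ - α₂ - 1 / η ^ 2) * -x) :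
    a₁ * x - α₁ * x ^ 2 + y ^ 2 + η * (a₂ * y - α₂ * x * y) < 0 := by
  have hy : y = -x / η := by
    field_simp
    linarith
  calc a₁ * x - α₁ * x ^ 2 + y ^ 2 + η * (a₂ * y - α₂ * x * y)
      = x * (a₁ - a₂ + (α₁ - α₂ - 1 / η ^ 2) * -x) := by
        subst hy
        field_simp
        ring
    _ < 0 := mul_neg_of_neg_of_pos hx (by linarith)

theorem wedge_field_neg_of_wedgeBarrier_eq_zero {a₁ a₂ α₁ α₂ ξ M : ℝ} {p : ℝ × ℝ} (hξ : 0 < ξ)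
    (hM : 0 < M) (hc : 0 ≤ α₁ - α₂ - 1 / ξ ^ 2) (h₁ : -a₁ < (α₁ - 1 / ξ ^ 2) * M)
    (h₂ : a₂ - a₁ < (α₁ - α₂ - 1 / ξ ^ 2) * M) (hp : ∀ i, wedgeBarrier ξ M i p ≤ 0)
    (j : Fin 3) (hj : wedgeBarrier ξ M j p = 0) :
    a₁ * p.1 - α₁ * p.1 ^ 2 + p.2 ^ 2 + wedgeSlope ξ j * (a₂ * p.2 - α₂ * p.1 * p.2) < 0 := by
  obtain ⟨hxM, hy⟩ := le_and_sq_le_of_forall_wedgeBarrier_nonpos hp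
  have hx : p.1 < 0 := by linarith
  have hslant : a₂ - a₁ < (α₁ - α₂ - 1 / ξ ^ 2) * -p.1 := by nlinarith
  fin_cases j <;> simp only [Fin.zero_eta, Fin.mk_one, Fin.reduceFinMk, wedgeBarrier_zero,
    wedgeBarrier_one, wedgeBarrier_two, wedgeSlope_zero, wedgeSlope_one, wedgeSlope_two] at hj ⊢
  · rw [zero_mul, add_zero]
    exact vertical_field_neg hξ.ne' hx hy (by rwa [show -p.1 = M by linarith])
  · exact slanted_field_neg hξ.ne' hx hj hslant
  · exact slanted_field_neg (neg_ne_zero.2 hξ.ne') hx hj (by rwa [neg_sq])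

theorem statement14_general (a₁ a₂ α₁ α₂ ξ : ℝ) (hα₂ : 0 < α₂)
    (hξ : 0 < ξ) (hξ' : 1 / ξ ^ 2 < α₁ - α₂) :
    ∃ M > (0:ℝ), ∀ b : EReal, 0 < b → ∀ z : ℝ → ℝ × ℝ,
      (∀ t : ℝ, 0 ≤ t → (t : EReal) < b →
        HasDerivAt z
          (a₁ * (z t).1 - α₁ * (z t).1 ^ 2 + (z t).2 ^ 2,
            a₂ * (z t).2 - α₂ * (z t).1 * (z t).2) t) →
      z 0 ∈ Uxi ξ M → ∀ t : ℝ, 0 ≤ t → (t : EReal) < b → z t ∈ Uxi ξ M := by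
  have hc : 0 < α₁ - α₂ - 1 / ξ ^ 2 := by linarith
  obtain ⟨M, hM, hMc⟩ := exists_pos_lt_mul hc (max (-a₁) (a₂ - a₁))
  refine ⟨M, hM, fun b _ z hz hz0 t ht htb => ?_⟩
  have hderiv : ∀ s ∈ Icc 0 t, HasDerivAt z _ s := fun s hs =>
    hz s hs.1 ((EReal.coe_le_coe_iff.2 hs.2).trans_lt htb)
  rw [mem_Uxi_iff hξ.le] at hz0 ⊢
  refine forall_neg_of_deriv_neg_at_zero (fun i s hs => (hderiv s hs).wedgeBarrier i)
    (fun s _ j hp hj => ?_) hz0 t ⟨ht, le_rfl⟩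
  refine wedge_field_neg_of_wedgeBarrier_eq_zero hξ hM hc.le ?_ ?_ hp j hj
  · nlinarith [le_max_left (-a₁) (a₂ - a₁)]
  · nlinarith [le_max_right (-a₁) (a₂ - a₁)]

/-- if `α₁ > α₂ > 0` and `1/ξ² < α₁ − α₂`, then for some `M > 0` the region
`U_{ξ,M}` is invariant under the flow of `x' = a₁x − α₁x² + y²`, `y' = a₂y − α₂xy`,
for solutions defined on `[0,b)` with `b ∈ (0,∞]`. -/
theorem statement14 (a₁ a₂ α₁ α₂ ξ : ℝ) (hα₂ : 0 < α₂) (hα : α₂ < α₁)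
    (hξ : 0 < ξ) (hξ' : 1 / ξ ^ 2 < α₁ - α₂) :
    ∃ M > (0:ℝ), ∀ b : EReal, 0 < b → ∀ z : ℝ → ℝ × ℝ,
      (∀ t : ℝ, 0 ≤ t → (t : EReal) < b →
        HasDerivAt z
          (a₁ * (z t).1 - α₁ * (z t).1 ^ 2 + (z t).2 ^ 2,
            a₂ * (z t).2 - α₂ * (z t).1 * (z t).2) t) →
      z 0 ∈ Uxi ξ M → ∀ t : ℝ, 0 ≤ t → (t : EReal) < b → z t ∈ Uxi ξ M :=
  statement14_general a₁ a₂ α₁ α₂ ξ hα₂ hξ hξ'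
end

section
/- Let a₁, a₂ ∈ ℝ and α₁ > α₂ > 0, and let ξ > 0 satisfy 1/ξ² < α₁ − α₂. Define ψ₁(x,y) = −x, ψ₂(x,y) = ξy − x, ψ₃(x,y) = −ξy − x. Then there exist M > 0 and C > 0 such that for all (x,y) ∈ U_{ξ,M}: (L⁰ψⱼ)(x,y) > 0 for j = 1, 2, 3, and moreover (L⁰ψ₁)(x,y) ≥ C·(ψ₁(x,y))². -/
/-- The first-order operator `L⁰` associated with the deterministic dynamics. -/
noncomputable def Lop0 (a₁ a₂ α₁ α₂ : ℝ) (φ : ℝ × ℝ → ℝ) (p : ℝ × ℝ) : ℝ :=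
  (a₁ * p.1 - α₁ * p.1 ^ 2 + p.2 ^ 2) * deriv (fun t => φ (t, p.2)) p.1
    + (a₂ * p.2 - α₂ * p.1 * p.2) * deriv (fun t => φ (p.1, t)) p.2

theorem Lop0_affine (a₁ a₂ α₁ α₂ c : ℝ) (p : ℝ × ℝ) :
    Lop0 a₁ a₂ α₁ α₂ (fun q => c * q.2 - q.1) p =
      α₁ * p.1 ^ 2 - a₁ * p.1 - p.2 ^ 2 + c * (a₂ * p.2 - α₂ * p.1 * p.2) := by
  have hx : deriv (fun t : ℝ => c * p.2 - t) p.1 = -1 := by simp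
  have hy : deriv (fun t : ℝ => c * t - p.1) p.2 = c := by simp
  simp only [Lop0, hx, hy]
  ring

theorem Lop0_affine_ge {a₁ a₂ α₁ α₂ ξ c : ℝ} (hα₂ : 0 ≤ α₂) (hξ : 0 < ξ) (hc : |c| ≤ ξ)
    {p : ℝ × ℝ} (hp : ξ * |p.2| < -p.1) :
    (α₁ - α₂ - 1 / ξ ^ 2) * (-p.1) ^ 2 - (|a₁| + |a₂|) * (-p.1) ≤
      Lop0 a₁ a₂ α₁ α₂ (fun q => c * q.2 - q.1) p := by
  obtain ⟨x, y⟩ := p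
  rw [Lop0_affine]
  dsimp only at hp ⊢
  have hcy : |c * y| ≤ -x := by
    rw [abs_mul]
    exact (mul_le_mul_of_nonneg_right hc (abs_nonneg y)).trans hp.le
  have hy2 : y ^ 2 ≤ 1 / ξ ^ 2 * (-x) ^ 2 := by
    rw [div_mul_eq_mul_div, one_mul, le_div_iff₀ (by positivity), ← sq_abs y, ← mul_pow,
      mul_comm]
    exact pow_le_pow_left₀ (by positivity) hp.le 2
  have hx : 0 ≤ -x := (abs_nonneg _).trans hcy
  have h₁ : -(|a₁| * -x) ≤ -(a₁ * x) := by
    have := le_abs_self (a₁ * x)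
    rw [abs_mul, abs_of_nonpos (show x ≤ 0 by linarith)] at this
    linarith
  have h₂ : -(|a₂| * -x) ≤ a₂ * (c * y) := by
    have := mul_le_mul_of_nonneg_left hcy (abs_nonneg a₂)
    rw [← abs_mul] at this
    linarith [neg_abs_le (a₂ * (c * y))]
  have h₃ : -(α₂ * (-x) ^ 2) ≤ -(α₂ * x * (c * y)) := by
    have := neg_abs_le (c * y)
    nlinarith [mul_nonneg hα₂ hx]
  linarith

theorem quadratic_absorbs_linear {δ K s : ℝ} (hδ : 0 < δ) (hK : 0 ≤ K) (hs : 2 * K / δ ≤ s) :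
    δ / 2 * s ^ 2 ≤ δ * s ^ 2 - K * s := by
  rw [div_le_iff₀ hδ] at hs
  have : 0 ≤ s := by nlinarith
  nlinarith

theorem statement15_general (a₁ a₂ α₁ α₂ ξ : ℝ) (hα₂ : 0 < α₂)
    (hξ : 0 < ξ) (hξ' : 1 / ξ ^ 2 < α₁ - α₂) :
    ∃ M > (0:ℝ), ∃ C > (0:ℝ), ∀ p ∈ Uxi ξ M,
      0 < Lop0 a₁ a₂ α₁ α₂ (fun q => -q.1) p ∧
      0 < Lop0 a₁ a₂ α₁ α₂ (fun q => ξ * q.2 - q.1) p ∧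
      0 < Lop0 a₁ a₂ α₁ α₂ (fun q => -ξ * q.2 - q.1) p ∧
      C * (-p.1) ^ 2 ≤ Lop0 a₁ a₂ α₁ α₂ (fun q => -q.1) p := by
  set δ := α₁ - α₂ - 1 / ξ ^ 2
  set K := |a₁| + |a₂|
  have hδ : 0 < δ := sub_pos.2 hξ'
  have hK : 0 ≤ K := by positivity
  refine ⟨(2 * K + 1) / δ, by positivity, δ / 2, by positivity, ?_⟩
  rintro p ⟨hpM, hpy⟩
  have hs : 2 * K / δ < -p.1 := calc
    2 * K / δ < (2 * K + 1) / δ := div_lt_div_of_pos_right (by linarith) hδ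
    _ < -p.1 := by linarith
  have hpos : 0 < δ / 2 * (-p.1) ^ 2 := by
    have : 0 < -p.1 := (by positivity : 0 ≤ 2 * K / δ).trans_lt hs
    positivity
  have bound (c : ℝ) (hc : |c| ≤ ξ) :
      δ / 2 * (-p.1) ^ 2 ≤ Lop0 a₁ a₂ α₁ α₂ (fun q => c * q.2 - q.1) p :=
    (quadratic_absorbs_linear hδ hK hs.le).trans (Lop0_affine_ge hα₂.le hξ hc hpy)
  have hψ₁ : (fun q : ℝ × ℝ => -q.1) = fun q => 0 * q.2 - q.1 := by simp
  have h0 : |(0 : ℝ)| ≤ ξ := by simpa using hξ.le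
  have hξ_abs : |ξ| ≤ ξ := (abs_of_pos hξ).le
  have hnegξ_abs : |-ξ| ≤ ξ := by rwa [abs_neg]
  rw [hψ₁]
  exact ⟨hpos.trans_le (bound 0 h0), hpos.trans_le (bound ξ hξ_abs),
    hpos.trans_le (bound (-ξ) hnegξ_abs), bound 0 h0⟩

/-- for some `M, C > 0`, on `U_{ξ,M}` one has `L⁰ψⱼ > 0` for
`ψ₁ = −x`, `ψ₂ = ξy − x`, `ψ₃ = −ξy − x`, and moreover `L⁰ψ₁ ≥ C·ψ₁²`. -/
theorem statement15 (a₁ a₂ α₁ α₂ ξ : ℝ) (hα₂ : 0 < α₂) (hα : α₂ < α₁)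
    (hξ : 0 < ξ) (hξ' : 1 / ξ ^ 2 < α₁ - α₂) :
    ∃ M > (0:ℝ), ∃ C > (0:ℝ), ∀ p ∈ Uxi ξ M,
      0 < Lop0 a₁ a₂ α₁ α₂ (fun q => -q.1) p ∧
      0 < Lop0 a₁ a₂ α₁ α₂ (fun q => ξ * q.2 - q.1) p ∧
      0 < Lop0 a₁ a₂ α₁ α₂ (fun q => -ξ * q.2 - q.1) p ∧
      C * (-p.1) ^ 2 ≤ Lop0 a₁ a₂ α₁ α₂ (fun q => -q.1) p :=
  statement15_general a₁ a₂ α₁ α₂ ξ hα₂ hξ hξ'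
end

section
/- Let a₁, a₂ ∈ ℝ and α₁ > α₂ > 0, and let ξ > 0 satisfy 1/ξ² < α₁ − α₂. Then there exist M > 0 and C > 0 such that: (i) U_{ξ,M} is invariant for the planar ODE x′ = a₁x − α₁x² + y², y′ = a₂y − α₂xy, and (ii) every differentiable curve z = (x,y) : [0, T) → ℝ² solving this ODE with z(0) = (x₀, y₀) ∈ U_{ξ,M} has T ≤ 1/(C|x₀|); that is, solutions starting in U_{ξ,M} cannot be continued beyond time 1/(C|x₀|), so they reach infinity in finite time. -/
/-!
The wedge `U_{ξ,M}` is cut out by the three affine functions `-x - M`, `-x - ξy`, `-x + ξy`.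
For `M` large, `1/ξ² < α₁ - α₂` makes the vector field point strictly into the wedge across
each of the three boundary lines, so a solution can never reach the boundary. Inside the wedge
`y² < x²/ξ²`, which gives `x' ≤ -α₂ x²`; comparing with the Riccati equation, `t ↦ α₂ t - 1/x(t)`
is nonincreasing while `-1/x(t) > 0`, so `t < 1/(α₂|x₀|)` along the solution.
-/

open Set Filter Topology

theorem HasDerivAt.nonpos_of_eventually_nonneg_left {g : ℝ → ℝ} {d t : ℝ} (hg : HasDerivAt g d t)
    (ht : g t = 0) (hleft : ∀ᶠ s in 𝓝[<] t, 0 ≤ g s) : d ≤ 0 := by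
  have hslope : Tendsto (slope g t) (𝓝[<] t) (𝓝 d) :=
    (hasDerivWithinAt_iff_tendsto_slope' self_notMem_Iio).1 hg.hasDerivWithinAt
  refine le_of_tendsto hslope ?_
  filter_upwards [hleft, self_mem_nhdsWithin] with s hs hst
  rw [slope_def_field, ht, sub_zero]
  exact div_nonpos_of_nonneg_of_nonpos hs (sub_neg.2 hst).le

theorem forall_pos_of_hasDerivAt_of_inward {ι E : Type*} [Finite ι] [NormedAddCommGroup E]
    [NormedSpace ℝ E] {φ : ι → E → ℝ} {φ' : ι → E → E →L[ℝ] ℝ} {F : E → E} {z : ℝ → E} {t : ℝ}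
    (hφ : ∀ i p, HasFDerivAt (φ i) (φ' i p) p)
    (hF : ∀ i p, φ i p = 0 → (∀ j, 0 ≤ φ j p) → 0 < φ' i p (F p))
    (hz : ∀ s ∈ Icc 0 t, HasDerivAt z (F (z s)) s) (ht : 0 ≤ t) (h0 : ∀ i, 0 < φ i (z 0)) :
    ∀ i, 0 < φ i (z t) := by
  have hg : ∀ i, ∀ s ∈ Icc 0 t, HasDerivAt (fun s => φ i (z s)) (φ' i (z s) (F (z s))) s :=
    fun i s hs => (hφ i (z s)).comp_hasDerivAt s (hz s hs)
  by_contra! hexit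
  obtain ⟨i, hi⟩ := hexit
  -- the first time at which some barrier function vanishes
  set S := ⋃ j, Icc 0 t ∩ (fun s => φ j (z s)) ⁻¹' Iic 0
  have hS : IsClosed S := isClosed_iUnion_of_finite fun j =>
    ContinuousOn.preimage_isClosed_of_isClosed
      (fun s hs => (hg j s hs).continuousAt.continuousWithinAt) isClosed_Icc isClosed_Iic
  have hSne : S.Nonempty := ⟨t, mem_iUnion.2 ⟨i, ⟨ht, le_rfl⟩, hi⟩⟩
  have hSbdd : BddBelow S := ⟨0, fun s hs => by
    obtain ⟨j, hj, -⟩ := mem_iUnion.1 hs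
    exact hj.1⟩
  obtain ⟨k, ht₁, hk⟩ := mem_iUnion.1 (hS.csInf_mem hSne hSbdd)
  set t₁ := sInf S
  have hbefore : ∀ s ∈ Ico 0 t₁, ∀ j, 0 < φ j (z s) := fun s hs j => by
    by_contra! h
    exact (csInf_le hSbdd (mem_iUnion.2 ⟨j, ⟨hs.1, hs.2.le.trans ht₁.2⟩, h⟩)).not_gt hs.2
  have ht₁pos : 0 < t₁ := ht₁.1.lt_of_ne fun h => (h0 k).not_ge (h ▸ hk)
  have hleft : ∀ᶠ s in 𝓝[<] t₁, ∀ j, 0 < φ j (z s) := by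
    filter_upwards [Ioo_mem_nhdsLT ht₁pos] with s hs using hbefore s ⟨hs.1.le, hs.2⟩
  have hlim : ∀ j, 0 ≤ φ j (z t₁) := fun j =>
    ge_of_tendsto ((hg j t₁ ht₁).continuousAt.tendsto.mono_left nhdsWithin_le_nhds)
      (hleft.mono fun s hs => (hs j).le)
  have hk0 : φ k (z t₁) = 0 := le_antisymm hk (hlim k)
  exact (hF k _ hk0 hlim).not_ge
    ((hg k t₁ ht₁).nonpos_of_eventually_nonneg_left hk0 (hleft.mono fun s hs => (hs k).le))

theorem le_one_div_of_hasDerivAt_le_neg_sq {x x' : ℝ → ℝ} {c T : ℝ} (hc : 0 < c)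
    (hx : ∀ t ∈ Ico 0 T, HasDerivAt x (x' t) t) (hneg : ∀ t ∈ Ico 0 T, x t < 0)
    (hx' : ∀ t ∈ Ico 0 T, x' t ≤ -c * x t ^ 2) : T ≤ 1 / (c * |x 0|) := by
  rcases le_or_gt T 0 with hT | hT
  · exact hT.trans (by positivity)
  have hx0 : x 0 < 0 := hneg 0 ⟨le_rfl, hT⟩
  have hu : ∀ t ∈ Ico 0 T, HasDerivAt (fun t => c * t - (x t)⁻¹) (c * 1 - -x' t / x t ^ 2) t :=
    fun t ht => ((hasDerivAt_id t).const_mul c).sub ((hx t ht).inv (hneg t ht).ne)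
  have hanti : AntitoneOn (fun t => c * t - (x t)⁻¹) (Ico 0 T) := by
    refine antitoneOn_of_hasDerivWithinAt_nonpos (convex_Ico 0 T)
      (fun t ht => (hu t ht).continuousAt.continuousWithinAt)
      (fun t ht => (hu t (interior_subset ht)).hasDerivWithinAt) fun t ht => ?_
    have ht' := interior_subset ht
    have hdiv := (div_le_iff₀ (sq_pos_of_neg (hneg t ht'))).2 (hx' t ht')
    rw [neg_div]
    linarith
  refine le_of_forall_lt_imp_le_of_dense fun s hs => ?_
  rcases lt_or_ge s 0 with hs0 | hs0
  · exact hs0.le.trans (by positivity)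
  have hmono := hanti ⟨le_rfl, hT⟩ ⟨hs0, hs⟩ hs0
  have hxs : (x s)⁻¹ < 0 := inv_lt_zero.2 (hneg s ⟨hs0, hs⟩)
  have hcs : c * s < -(x 0)⁻¹ := by
    simp only [mul_zero, zero_sub] at hmono
    linarith
  rw [le_div_iff₀ (mul_pos hc (abs_pos.2 hx0.ne)), abs_of_neg hx0]
  calc s * (c * -x 0) = c * s * -x 0 := by ring
    _ ≤ -(x 0)⁻¹ * -x 0 := mul_le_mul_of_nonneg_right hcs.le (by linarith)
    _ = 1 := by rw [neg_mul_neg, inv_mul_cancel₀ hx0.ne]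

def odeField (a₁ a₂ α₁ α₂ : ℝ) (p : ℝ × ℝ) : ℝ × ℝ :=
  (a₁ * p.1 - α₁ * p.1 ^ 2 + p.2 ^ 2, a₂ * p.2 - α₂ * p.1 * p.2)

/- The slanted sides are both written as `-x - η y` (`η = ±ξ`), so that
`odeField_inward_of_boundary` covers them at once. -/
open ContinuousLinearMap in
def wedgeFunctional (ξ : ℝ) : Fin 3 → ℝ × ℝ →L[ℝ] ℝ :=
  ![-fst ℝ ℝ ℝ, -fst ℝ ℝ ℝ - ξ • snd ℝ ℝ ℝ, -fst ℝ ℝ ℝ - (-ξ) • snd ℝ ℝ ℝ]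

section
variable {ξ M : ℝ} {p : ℝ × ℝ}

lemma forall_wedgeFunctional_sub_iff (P : ℝ → Prop) :
    (∀ i, P (wedgeFunctional ξ i p - ![M, 0, 0] i))
      ↔ P (-p.1 - M) ∧ P (-p.1 - ξ * p.2) ∧ P (-p.1 + ξ * p.2) := by
  simp [Fin.forall_fin_succ, wedgeFunctional, sub_eq_add_neg]

lemma forall_wedgeFunctional_pos_iff (hξ : 0 ≤ ξ) :
    (∀ i, 0 < wedgeFunctional ξ i p - ![M, 0, 0] i) ↔ p ∈ Uxi ξ M := by
  have h : ξ * |p.2| = |ξ * p.2| := by rw [abs_mul, abs_of_nonneg hξ]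
  rw [forall_wedgeFunctional_sub_iff (0 < ·), Uxi, mem_ofPred_eq, h, abs_lt]
  constructor
  · rintro ⟨h₀, h₁, h₂⟩
    exact ⟨by linarith, by linarith, by linarith⟩
  · rintro ⟨h₀, h₁, h₂⟩
    exact ⟨by linarith, by linarith, by linarith⟩

lemma forall_wedgeFunctional_nonneg_iff (hξ : 0 ≤ ξ) :
    (∀ i, 0 ≤ wedgeFunctional ξ i p - ![M, 0, 0] i) ↔ M ≤ -p.1 ∧ ξ * |p.2| ≤ -p.1 := by
  have h : ξ * |p.2| = |ξ * p.2| := by rw [abs_mul, abs_of_nonneg hξ]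
  rw [forall_wedgeFunctional_sub_iff (0 ≤ ·), h, abs_le]
  constructor
  · rintro ⟨h₀, h₁, h₂⟩
    exact ⟨by linarith, by linarith, by linarith⟩
  · rintro ⟨h₀, h₁, h₂⟩
    exact ⟨by linarith, by linarith, by linarith⟩
end

section
variable {a₁ a₂ α₁ α₂ ξ : ℝ} {p : ℝ × ℝ}

lemma odeField_fst_le_neg_sq (hξ : 0 < ξ) (hx : |a₁| < (α₁ - α₂ - 1 / ξ ^ 2) * -p.1)
    (hy : ξ * |p.2| ≤ -p.1) : (odeField a₁ a₂ α₁ α₂ p).1 ≤ -α₂ * p.1 ^ 2 := by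
  have hy2 : p.2 ^ 2 ≤ p.1 ^ 2 / ξ ^ 2 := by
    rw [le_div_iff₀ (by positivity), ← sq_abs p.2]
    calc |p.2| ^ 2 * ξ ^ 2 = (ξ * |p.2|) ^ 2 := by ring
      _ ≤ (-p.1) ^ 2 := pow_le_pow_left₀ (by positivity) hy 2
      _ = p.1 ^ 2 := by ring
  have hneg : 0 ≤ -p.1 := (mul_nonneg hξ.le (abs_nonneg _)).trans hy
  simp only [odeField]
  linear_combination mul_nonneg hneg (sub_nonneg.2 hx.le)
    + mul_le_mul_of_nonneg_right (neg_le_abs a₁) hneg + hy2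

lemma odeField_inward_of_boundary {η : ℝ} (hη : η ^ 2 = ξ ^ 2) (hξ : 0 < ξ)
    (hb : η * p.2 = -p.1) (hx0 : 0 < -p.1)
    (hx : |a₁| + |a₂| < (α₁ - α₂ - 1 / ξ ^ 2) * -p.1) :
    0 < -(odeField a₁ a₂ α₁ α₂ p).1 - η * (odeField a₁ a₂ α₁ α₂ p).2 := by
  have hy2 : p.2 ^ 2 = p.1 ^ 2 / ξ ^ 2 := by
    rw [eq_div_iff (by positivity), ← hη]
    linear_combination (η * p.2 - p.1) * hb
  have key : -(odeField a₁ a₂ α₁ α₂ p).1 - η * (odeField a₁ a₂ α₁ α₂ p).2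
      = -p.1 * (a₁ - a₂ + (α₁ - α₂ - 1 / ξ ^ 2) * -p.1) := by
    simp only [odeField]
    linear_combination (α₂ * p.1 - a₂) * hb - hy2
  rw [key]
  exact mul_pos hx0 (by linarith [neg_abs_le a₁, le_abs_self a₂])
end

theorem mem_Uxi_of_hasDerivAt_odeField {a₁ a₂ α₁ α₂ ξ M : ℝ} (hα₂ : 0 < α₂) (hξ : 0 < ξ)
    (hκ : 0 < α₁ - α₂ - 1 / ξ ^ 2) (hMa : |a₁| + |a₂| < (α₁ - α₂ - 1 / ξ ^ 2) * M)
    {z : ℝ → ℝ × ℝ} {t : ℝ} (ht : 0 ≤ t)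
    (hz : ∀ s ∈ Icc 0 t, HasDerivAt z (odeField a₁ a₂ α₁ α₂ (z s)) s) (h0 : z 0 ∈ Uxi ξ M) :
    z t ∈ Uxi ξ M := by
  rw [← forall_wedgeFunctional_pos_iff hξ.le] at h0 ⊢
  refine forall_pos_of_hasDerivAt_of_inward (φ := fun i p => wedgeFunctional ξ i p - ![M, 0, 0] i)
    (φ' := fun i _ => wedgeFunctional ξ i)
    (fun i p => (wedgeFunctional ξ i).hasFDerivAt.sub_const _) ?_ hz ht h0
  intro i p hi hp
  obtain ⟨hMp, hy⟩ := (forall_wedgeFunctional_nonneg_iff hξ.le).1 hp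
  have hM : 0 < M := pos_of_mul_pos_right (hMa.trans_le' (by positivity)) hκ.le
  have hx : |a₁| + |a₂| < (α₁ - α₂ - 1 / ξ ^ 2) * -p.1 :=
    hMa.trans_le (mul_le_mul_of_nonneg_left hMp hκ.le)
  have hx0 : 0 < -p.1 := hM.trans_le hMp
  fin_cases i
  · change 0 < -(odeField a₁ a₂ α₁ α₂ p).1
    have hF := odeField_fst_le_neg_sq (a₂ := a₂) hξ
      ((le_add_of_nonneg_right (abs_nonneg _)).trans_lt hx) hy
    nlinarith [mul_pos hα₂ (pow_pos hx0 2)]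
  · change -p.1 - ξ * p.2 - 0 = 0 at hi
    change 0 < -(odeField a₁ a₂ α₁ α₂ p).1 - ξ * (odeField a₁ a₂ α₁ α₂ p).2
    exact odeField_inward_of_boundary rfl hξ (by linarith) hx0 hx
  · change -p.1 - -ξ * p.2 - 0 = 0 at hi
    change 0 < -(odeField a₁ a₂ α₁ α₂ p).1 - -ξ * (odeField a₁ a₂ α₁ α₂ p).2
    exact odeField_inward_of_boundary (neg_sq ξ) hξ (by linarith) hx0 hx

theorem statement16_general (a₁ a₂ α₁ α₂ ξ : ℝ) (hα₂ : 0 < α₂)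
    (hξ : 0 < ξ) (hξ' : 1 / ξ ^ 2 < α₁ - α₂) :
    ∃ M > (0:ℝ), ∃ C > (0:ℝ),
      (∀ b : EReal, 0 < b → ∀ z : ℝ → ℝ × ℝ,
        (∀ t : ℝ, 0 ≤ t → (t : EReal) < b →
          HasDerivAt z
            (a₁ * (z t).1 - α₁ * (z t).1 ^ 2 + (z t).2 ^ 2,
              a₂ * (z t).2 - α₂ * (z t).1 * (z t).2) t) →
        z 0 ∈ Uxi ξ M → ∀ t : ℝ, 0 ≤ t → (t : EReal) < b → z t ∈ Uxi ξ M) ∧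
      ∀ T : ℝ, ∀ z : ℝ → ℝ × ℝ,
        (∀ t : ℝ, 0 ≤ t → t < T →
          HasDerivAt z
            (a₁ * (z t).1 - α₁ * (z t).1 ^ 2 + (z t).2 ^ 2,
              a₂ * (z t).2 - α₂ * (z t).1 * (z t).2) t) →
        z 0 ∈ Uxi ξ M → T ≤ 1 / (C * |(z 0).1|) := by
  have hκ : 0 < α₁ - α₂ - 1 / ξ ^ 2 := sub_pos.2 hξ'
  set M := (|a₁| + |a₂| + 1) / (α₁ - α₂ - 1 / ξ ^ 2)
  have hMa : |a₁| + |a₂| < (α₁ - α₂ - 1 / ξ ^ 2) * M := by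
    rw [mul_div_cancel₀ _ hκ.ne']
    linarith
  have hM : 0 < M := by positivity
  have hinv {z : ℝ → ℝ × ℝ} {t : ℝ} (ht : 0 ≤ t)
      (hz : ∀ s ∈ Icc 0 t, HasDerivAt z (odeField a₁ a₂ α₁ α₂ (z s)) s) (h0 : z 0 ∈ Uxi ξ M) :
      z t ∈ Uxi ξ M :=
    mem_Uxi_of_hasDerivAt_odeField hα₂ hξ hκ hMa ht hz h0
  refine ⟨M, hM, α₂, hα₂, fun b _ z hz h0 t ht htb => ?_, fun T z hz h0 => ?_⟩
  · exact hinv ht (fun s hs => hz s hs.1 ((EReal.coe_le_coe_iff.2 hs.2).trans_lt htb)) h0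
  have hU : ∀ t ∈ Ico 0 T, z t ∈ Uxi ξ M :=
    fun t ht => hinv ht.1 (fun s hs => hz s hs.1 (hs.2.trans_lt ht.2)) h0
  refine le_one_div_of_hasDerivAt_le_neg_sq (x := fun t => (z t).1)
    (x' := fun t => (odeField a₁ a₂ α₁ α₂ (z t)).1) hα₂ (fun t ht => (hz t ht.1 ht.2).fst)
    (fun t ht => by linarith [(hU t ht).1]) fun t ht => odeField_fst_le_neg_sq hξ ?_ (hU t ht).2.le
  have hMx : M ≤ -(z t).1 := by linarith [(hU t ht).1]
  linarith [abs_nonneg a₂, mul_le_mul_of_nonneg_left hMx hκ.le]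

/-- for some `M, C > 0`, the region `U_{ξ,M}` is invariant for the ODE, and
every solution on `[0,T)` starting at `(x₀,y₀) ∈ U_{ξ,M}` satisfies `T ≤ 1/(C|x₀|)`:
solutions starting in `U_{ξ,M}` reach infinity in finite time. -/
theorem statement16 (a₁ a₂ α₁ α₂ ξ : ℝ) (hα₂ : 0 < α₂) (hα : α₂ < α₁)
    (hξ : 0 < ξ) (hξ' : 1 / ξ ^ 2 < α₁ - α₂) :
    ∃ M > (0:ℝ), ∃ C > (0:ℝ),
      (∀ b : EReal, 0 < b → ∀ z : ℝ → ℝ × ℝ,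
        (∀ t : ℝ, 0 ≤ t → (t : EReal) < b →
          HasDerivAt z
            (a₁ * (z t).1 - α₁ * (z t).1 ^ 2 + (z t).2 ^ 2,
              a₂ * (z t).2 - α₂ * (z t).1 * (z t).2) t) →
        z 0 ∈ Uxi ξ M → ∀ t : ℝ, 0 ≤ t → (t : EReal) < b → z t ∈ Uxi ξ M) ∧
      ∀ T : ℝ, ∀ z : ℝ → ℝ × ℝ,
        (∀ t : ℝ, 0 ≤ t → t < T →
          HasDerivAt z
            (a₁ * (z t).1 - α₁ * (z t).1 ^ 2 + (z t).2 ^ 2,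
              a₂ * (z t).2 - α₂ * (z t).1 * (z t).2) t) →
        z 0 ∈ Uxi ξ M → T ≤ 1 / (C * |(z 0).1|) :=
  statement16_general a₁ a₂ α₁ α₂ ξ hα₂ hξ hξ'
end
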